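/- arXiv:1508.05777 — 7 statements merged into one kernel-verified Lean document; each statement's English description precedes it below -/
import Mathlib

section
/- Consider the game Nim^1_{2,≤2} (slow Moore's Nim with n = 2 piles, k = 2). For every position x = (x_1, x_2) with 0 ≤ x_1 ≤ x_2, the Sprague–Grundy value G(x) equals: 0 if x_1 and x_2 are both even; 1 if x_1 is even and x_2 is odd; 2 if x_1 and x_2 are both odd; 3 if x_1 is odd and x_2 is even. -/
/-- The minimum excludant of a set of natural numbers. -/
noncomputable def mex (S : Set ℕ) : ℕ := sInf {n : ℕ | n ∉ S}

/-- A move in slow Moore's Nim `Nim¹_{n,≤k}`: at least `1` and at most `k`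
coordinates, each strictly positive, are decreased by one token. -/
def MooreMove (n k : ℕ) (x y : Fin n → ℕ) : Prop :=
  (∀ i, y i ≤ x i ∧ x i ≤ y i + 1) ∧
  1 ≤ (Finset.univ.filter fun i => y i < x i).card ∧
  (Finset.univ.filter fun i => y i < x i).card ≤ k

theorem MooreMove.sum_lt {n k : ℕ} {x y : Fin n → ℕ} (h : MooreMove n k x y) :
    ∑ i, y i < ∑ i, x i := by
  obtain ⟨h1, h2, -⟩ := h
  obtain ⟨i, hi⟩ := Finset.card_pos.mp h2
  rw [Finset.mem_filter] at hi
  exact Finset.sum_lt_sum (fun j _ => (h1 j).1) ⟨i, Finset.mem_univ i, hi.2⟩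

/-- The normal-play Sprague–Grundy function of slow Moore's Nim:
`G(x) = mex {G(y) : y reachable from x in one move}`. -/
noncomputable def mooreG (n k : ℕ) (x : Fin n → ℕ) : ℕ :=
  mex (Set.range fun y : {y : Fin n → ℕ // MooreMove n k x y} => mooreG n k y.1)
termination_by ∑ i, x i
decreasing_by exact y.2.sum_lt

def mooreV (a b : ℕ) : ℕ := 2 * (min a b % 2) + (a + b) % 2

lemma mex_eq_of {S : Set ℕ} {n : ℕ} (h1 : n ∉ S) (h2 : ∀ m < n, m ∈ S) :
    mex S = n := by
  refine le_antisymm (Nat.sInf_le h1) (le_csInf ⟨n, h1⟩ fun m hm => ?_)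
  by_contra h
  exact hm (h2 m (by omega))

lemma moves_iff {x y : Fin 2 → ℕ} :
    MooreMove 2 2 x y ↔
      (1 ≤ x 0 ∧ y 0 + 1 = x 0 ∧ y 1 = x 1) ∨
      (1 ≤ x 1 ∧ y 0 = x 0 ∧ y 1 + 1 = x 1) ∨
      (1 ≤ x 0 ∧ 1 ≤ x 1 ∧ y 0 + 1 = x 0 ∧ y 1 + 1 = x 1) := by
  constructor
  · rintro ⟨h1, h2, -⟩
    have h0 := h1 0
    have h1' := h1 1
    obtain ⟨i, hi⟩ := Finset.card_pos.mp h2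
    rw [Finset.mem_filter] at hi
    have key : y 0 < x 0 ∨ y 1 < x 1 := by
      fin_cases i
      · exact Or.inl hi.2
      · exact Or.inr hi.2
    omega
  · intro h
    refine ⟨fun i => ?_, ?_, ?_⟩
    · fin_cases i
      · exact show y 0 ≤ x 0 ∧ x 0 ≤ y 0 + 1 by omega
      · exact show y 1 ≤ x 1 ∧ x 1 ≤ y 1 + 1 by omega
    · refine Finset.card_pos.mpr ?_
      rcases h with h | h | h
      · exact ⟨0, by simp only [Finset.mem_filter, Finset.mem_univ, true_and]; omega⟩
      · exact ⟨1, by simp only [Finset.mem_filter, Finset.mem_univ, true_and]; omega⟩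
      · exact ⟨0, by simp only [Finset.mem_filter, Finset.mem_univ, true_and]; omega⟩
    · exact (Finset.card_filter_le _ _).trans (by simp)

lemma mooreG_eq (x : Fin 2 → ℕ) :
    mooreG 2 2 x = mex {g | ∃ y, MooreMove 2 2 x y ∧ mooreG 2 2 y = g} := by
  rw [mooreG]
  congr 1
  ext g
  constructor
  · rintro ⟨⟨y, hy⟩, rfl⟩
    exact ⟨y, hy, rfl⟩
  · rintro ⟨y, hy, rfl⟩
    exact ⟨⟨y, hy⟩, rfl⟩

lemma mooreG_main : ∀ (N : ℕ) (x : Fin 2 → ℕ), x 0 + x 1 < N →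
    mooreG 2 2 x = mooreV (x 0) (x 1) := by
  intro N
  induction N with
  | zero => exact fun x hx => absurd hx (by omega)
  | succ N IH =>
    intro x hx
    have key : ∀ y : Fin 2 → ℕ, MooreMove 2 2 x y →
        mooreG 2 2 y = mooreV (y 0) (y 1) := by
      intro y hy
      have := hy.sum_lt
      rw [Fin.sum_univ_two, Fin.sum_univ_two] at this
      exact IH y (by omega)
    rw [mooreG_eq]
    apply mex_eq_of
    · rintro ⟨y, hy, hg⟩
      rw [key y hy] at hg
      rw [moves_iff] at hy
      unfold mooreV at hg
      rcases hy with ⟨h, e0, e1⟩ | ⟨h, e0, e1⟩ | ⟨h, h', e0, e1⟩ <;> omega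
    · intro m hm
      have mk : ∀ c d : ℕ,
          ((1 ≤ x 0 ∧ c + 1 = x 0 ∧ d = x 1) ∨
           (1 ≤ x 1 ∧ c = x 0 ∧ d + 1 = x 1) ∨
           (1 ≤ x 0 ∧ 1 ≤ x 1 ∧ c + 1 = x 0 ∧ d + 1 = x 1)) →
          mooreV c d = m →
          m ∈ {g | ∃ y, MooreMove 2 2 x y ∧ mooreG 2 2 y = g} := by
        intro c d h e
        have hmv : MooreMove 2 2 x ![c, d] := by
          rw [moves_iff]
          simpa using h
        refine ⟨![c, d], hmv, ?_⟩
        rw [key _ hmv]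
        simpa using e
      unfold mooreV at hm
      rcases Nat.mod_two_eq_zero_or_one (x 0) with p0 | p0 <;>
        rcases Nat.mod_two_eq_zero_or_one (x 1) with p1 | p1
      · exact absurd hm (by omega)
      · rcases le_or_gt (x 0) (x 1) with h | h
        · exact mk (x 0) (x 1 - 1) (by omega) (by unfold mooreV; omega)
        · rcases (by omega : m = 0 ∨ m = 1 ∨ m = 2) with rfl | rfl | rfl
          · exact mk (x 0) (x 1 - 1) (by omega) (by unfold mooreV; omega)
          · exact mk (x 0 - 1) (x 1 - 1) (by omega) (by unfold mooreV; omega)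
          · exact mk (x 0 - 1) (x 1) (by omega) (by unfold mooreV; omega)
      · rcases le_or_gt (x 1) (x 0) with h | h
        · exact mk (x 0 - 1) (x 1) (by omega) (by unfold mooreV; omega)
        · rcases (by omega : m = 0 ∨ m = 1 ∨ m = 2) with rfl | rfl | rfl
          · exact mk (x 0 - 1) (x 1) (by omega) (by unfold mooreV; omega)
          · exact mk (x 0 - 1) (x 1 - 1) (by omega) (by unfold mooreV; omega)
          · exact mk (x 0) (x 1 - 1) (by omega) (by unfold mooreV; omega)
      · rcases (by omega : m = 0 ∨ m = 1) with rfl | rfl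
        · exact mk (x 0 - 1) (x 1 - 1) (by omega) (by unfold mooreV; omega)
        · rcases le_or_gt (x 0) (x 1) with h | h
          · exact mk (x 0 - 1) (x 1) (by omega) (by unfold mooreV; omega)
          · exact mk (x 0) (x 1 - 1) (by omega) (by unfold mooreV; omega)

/-- In `Nim¹_{2,≤2}` the Sprague–Grundy value of a position `(x₁, x₂)` with
`x₁ ≤ x₂` is determined by the parities of the coordinates. -/
theorem stmt0 (x : Fin 2 → ℕ) (hx : x 0 ≤ x 1) :
    ((Even (x 0) ∧ Even (x 1)) → mooreG 2 2 x = 0) ∧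
    ((Even (x 0) ∧ Odd (x 1)) → mooreG 2 2 x = 1) ∧
    ((Odd (x 0) ∧ Odd (x 1)) → mooreG 2 2 x = 2) ∧
    ((Odd (x 0) ∧ Even (x 1)) → mooreG 2 2 x = 3) := by
  rw [mooreG_main (x 0 + x 1 + 1) x (by omega)]
  simp only [Nat.even_iff, Nat.odd_iff, mooreV]
  omega
end

section
/- Consider the game Nim^1_{3,≤2} (slow Moore's Nim with n = 3 piles, k = 2). For every position x = (x_1, x_2, x_3) with 0 ≤ x_1 ≤ x_2 ≤ x_3, the Sprague–Grundy value G(x) equals: 0 if the parity vector p(x) is (e,e,e) or (o,o,o); 1 if p(x) is (e,e,o) or (o,o,e); 2 if p(x) is (e,o,o) or (o,e,e); 3 if p(x) is (e,o,e) or (o,e,o). -/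
/-! ### Auxiliary development -/
set_option maxHeartbeats 2000000

def Fv (a b c : ℕ) : ℕ :=
  2 * ((a + b + c + max a (max b c)) % 2) + ((a + b + c + min a (min b c)) % 2)

lemma Fv_perm (a b c a' b' c' : ℕ) (h1 : min a (min b c) = min a' (min b' c'))
    (h2 : max a (max b c) = max a' (max b' c')) (h3 : a + b + c = a' + b' + c') :
    Fv a b c = Fv a' b' c' := by
  unfold Fv; rw [h1, h2, h3]

lemma Fv_sorted (a b c : ℕ) (h1 : a ≤ b) (h2 : b ≤ c) :
    Fv a b c = 2 * ((a + b) % 2) + ((b + c) % 2) := by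
  unfold Fv
  have e1 : max a (max b c) = c := by omega
  have e2 : min a (min b c) = a := by omega
  rw [e1, e2]; omega

lemma sort3 (a b c : ℕ) : ∃ p q r : ℕ, p ≤ q ∧ q ≤ r ∧ p = min a (min b c) ∧
    r = max a (max b c) ∧ p + q + r = a + b + c :=
  ⟨min a (min b c), a + b + c - min a (min b c) - max a (max b c), max a (max b c),
    by omega, by omega, rfl, rfl, by omega⟩

lemma hmin (a b c a' b' c' : ℕ) (h1 : a' ≤ a) (h2 : a ≤ a' + 1) (h3 : b' ≤ b)
    (h4 : b ≤ b' + 1) (h5 : c' ≤ c) (h6 : c ≤ c' + 1) :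
    min a' (min b' c') ≤ min a (min b c) ∧ min a (min b c) ≤ min a' (min b' c') + 1 := by
  omega

lemma hmax (a b c a' b' c' : ℕ) (h1 : a' ≤ a) (h2 : a ≤ a' + 1) (h3 : b' ≤ b)
    (h4 : b ≤ b' + 1) (h5 : c' ≤ c) (h6 : c ≤ c' + 1) :
    max a' (max b' c') ≤ max a (max b c) ∧ max a (max b c) ≤ max a' (max b' c') + 1 := by
  omega

lemma hmed (a b c a' b' c' : ℕ) (h1 : a' ≤ a) (h2 : a ≤ a' + 1) (h3 : b' ≤ b)
    (h4 : b ≤ b' + 1) (h5 : c' ≤ c) (h6 : c ≤ c' + 1)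
    (hd2 : (a - a') + (b - b') + (c - c') ≤ 2) :
    (min a (min b c) - min a' (min b' c')) + (max a (max b c) - max a' (max b' c'))
      ≤ (a - a') + (b - b') + (c - c') ∧
    (a - a') + (b - b') + (c - c')
      ≤ (min a (min b c) - min a' (min b' c')) + (max a (max b c) - max a' (max b' c')) + 1 := by
  omega

lemma Fv_of_sort (a b c p q r : ℕ) (hpq : p ≤ q) (hqr : q ≤ r) (hpm : p = min a (min b c))
    (hrm : r = max a (max b c)) (hsum : p + q + r = a + b + c) :
    Fv a b c = 2 * ((p + q) % 2) + ((q + r) % 2) := by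
  rw [Fv_perm a b c p q r (by rw [min_eq_left hqr, min_eq_left hpq]; exact hpm.symm)
    (by rw [max_eq_right hqr, max_eq_right (hpq.trans hqr)]; exact hrm.symm) hsum.symm]
  exact Fv_sorted p q r hpq hqr

lemma keyA_final (p q r p' q' r' D : ℕ) (b1 : p' ≤ p) (b2 : p ≤ p' + 1) (b3 : r' ≤ r)
    (b4 : r ≤ r' + 1) (b5 : (p - p') + (r - r') ≤ D) (b6 : D ≤ (p - p') + (r - r') + 1)
    (hpq : p ≤ q) (hqr : q ≤ r) (hpq' : p' ≤ q') (hqr' : q' ≤ r')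
    (hS : p + q + r = p' + q' + r' + D) (hd1 : 1 ≤ D) (hd2 : D ≤ 2) :
    2 * ((p' + q') % 2) + ((q' + r') % 2) ≠ 2 * ((p + q) % 2) + ((q + r) % 2) := by
  omega

lemma keyA (a b c a' b' c' : ℕ) (h1 : a' ≤ a) (h2 : a ≤ a' + 1) (h3 : b' ≤ b)
    (h4 : b ≤ b' + 1) (h5 : c' ≤ c) (h6 : c ≤ c' + 1)
    (hd1 : 1 ≤ (a - a') + (b - b') + (c - c')) (hd2 : (a - a') + (b - b') + (c - c') ≤ 2) :
    Fv a' b' c' ≠ Fv a b c := by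
  have hS0 : a + b + c = a' + b' + c' + ((a - a') + (b - b') + (c - c')) := by omega
  obtain ⟨p, q, r, hpq, hqr, hpm, hrm, hsum⟩ := sort3 a b c
  obtain ⟨p', q', r', hpq', hqr', hpm', hrm', hsum'⟩ := sort3 a' b' c'
  rw [Fv_of_sort a b c p q r hpq hqr hpm hrm hsum,
    Fv_of_sort a' b' c' p' q' r' hpq' hqr' hpm' hrm' hsum']
  have Hmin := hmin a b c a' b' c' h1 h2 h3 h4 h5 h6
  have Hmax := hmax a b c a' b' c' h1 h2 h3 h4 h5 h6
  have Hmed := hmed a b c a' b' c' h1 h2 h3 h4 h5 h6 hd2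
  rw [← hpm, ← hpm'] at Hmin
  rw [← hrm, ← hrm'] at Hmax
  rw [← hpm, ← hpm', ← hrm, ← hrm'] at Hmed
  exact keyA_final p q r p' q' r' ((a - a') + (b - b') + (c - c')) Hmin.1 Hmin.2 Hmax.1
    Hmax.2 Hmed.1 Hmed.2 hpq hqr hpq' hqr' (by rw [hsum, hsum']; exact hS0) hd1 hd2

lemma keyB (a b c m : ℕ) (h1 : a ≤ b) (h2 : b ≤ c) (hm : m < Fv a b c) :
    ∃ a' b' c', a' ≤ a ∧ a ≤ a' + 1 ∧ b' ≤ b ∧ b ≤ b' + 1 ∧ c' ≤ c ∧ c ≤ c' + 1 ∧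
      1 ≤ (a - a') + (b - b') + (c - c') ∧ (a - a') + (b - b') + (c - c') ≤ 2 ∧
      Fv a' b' c' = m := by
  rw [Fv_sorted a b c h1 h2] at hm
  have ea := Nat.mod_two_eq_zero_or_one a
  have eb := Nat.mod_two_eq_zero_or_one b
  have ec := Nat.mod_two_eq_zero_or_one c
  rcases ea with ea | ea <;> rcases eb with eb | eb <;> rcases ec with ec | ec
  · exact absurd hm (by omega)
  · -- e e o : f = 1, m = 0, decrease c
    exact ⟨a, b, c - 1, by omega, by omega, by omega, by omega, by omega, by omega,
      by omega, by omega, by rw [Fv_sorted a b (c-1) h1 (by omega)]; omega⟩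
  · -- e o e : f = 3
    have hm3 : m < 3 := by omega
    interval_cases m
    · exact ⟨a, b - 1, c, by omega, by omega, by omega, by omega, by omega, by omega,
        by omega, by omega, by rw [Fv_sorted a (b-1) c (by omega) (by omega)]; omega⟩
    · exact ⟨a, b - 1, c - 1, by omega, by omega, by omega, by omega, by omega, by omega,
        by omega, by omega, by rw [Fv_sorted a (b-1) (c-1) (by omega) (by omega)]; omega⟩
    · exact ⟨a, b, c - 1, by omega, by omega, by omega, by omega, by omega, by omega,
        by omega, by omega, by rw [Fv_sorted a b (c-1) h1 (by omega)]; omega⟩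
  · -- e o o : f = 2
    have hm2 : m < 2 := by omega
    interval_cases m
    · exact ⟨a, b - 1, c - 1, by omega, by omega, by omega, by omega, by omega, by omega,
        by omega, by omega, by rw [Fv_sorted a (b-1) (c-1) (by omega) (by omega)]; omega⟩
    · exact ⟨a, b - 1, c, by omega, by omega, by omega, by omega, by omega, by omega,
        by omega, by omega, by rw [Fv_sorted a (b-1) c (by omega) (by omega)]; omega⟩
  · -- o e e : f = 2
    have hm2 : m < 2 := by omega
    interval_cases m
    · exact ⟨a - 1, b, c, by omega, by omega, by omega, by omega, by omega, by omega,
        by omega, by omega, by rw [Fv_sorted (a-1) b c (by omega) h2]; omega⟩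
    · exact ⟨a, b - 1, c, by omega, by omega, by omega, by omega, by omega, by omega,
        by omega, by omega, by rw [Fv_sorted a (b-1) c (by omega) (by omega)]; omega⟩
  · -- o e o : f = 3
    have hm3 : m < 3 := by omega
    interval_cases m
    · exact ⟨a - 1, b, c - 1, by omega, by omega, by omega, by omega, by omega, by omega,
        by omega, by omega, by rw [Fv_sorted (a-1) b (c-1) (by omega) (by omega)]; omega⟩
    · exact ⟨a - 1, b, c, by omega, by omega, by omega, by omega, by omega, by omega,
        by omega, by omega, by rw [Fv_sorted (a-1) b c (by omega) h2]; omega⟩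
    · exact ⟨a, b, c - 1, by omega, by omega, by omega, by omega, by omega, by omega,
        by omega, by omega, by rw [Fv_sorted a b (c-1) h1 (by omega)]; omega⟩
  · -- o o e : f = 1
    exact ⟨a - 1, b - 1, c, by omega, by omega, by omega, by omega, by omega, by omega,
      by omega, by omega, by rw [Fv_sorted (a-1) (b-1) c (by omega) (by omega)]; omega⟩
  · exact absurd hm (by omega)

lemma keyB' (a b c m : ℕ) (hm : m < Fv a b c) :
    ∃ a' b' c', a' ≤ a ∧ a ≤ a' + 1 ∧ b' ≤ b ∧ b ≤ b' + 1 ∧ c' ≤ c ∧ c ≤ c' + 1 ∧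
      1 ≤ (a - a') + (b - b') + (c - c') ∧ (a - a') + (b - b') + (c - c') ≤ 2 ∧
      Fv a' b' c' = m := by
  rcases le_total a b with hab | hab <;> rcases le_total b c with hbc | hbc <;>
    rcases le_total a c with hac | hac
  · exact keyB a b c m hab hbc hm
  · exact keyB a b c m hab (by omega) hm
  · obtain ⟨p, q, r, u1, u2, u3, u4, u5, u6, u7, u8, u9⟩ :=
      keyB a c b m hac hbc (by rw [← Fv_perm a b c a c b (by omega) (by omega) (by omega)]; exact hm)
    exact ⟨p, r, q, u1, u2, u5, u6, u3, u4, by omega, by omega,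
      by rw [Fv_perm p r q p q r (by omega) (by omega) (by omega)]; exact u9⟩
  · obtain ⟨p, q, r, u1, u2, u3, u4, u5, u6, u7, u8, u9⟩ :=
      keyB c a b m hac hab (by rw [← Fv_perm a b c c a b (by omega) (by omega) (by omega)]; exact hm)
    exact ⟨q, r, p, u3, u4, u5, u6, u1, u2, by omega, by omega,
      by rw [Fv_perm q r p p q r (by omega) (by omega) (by omega)]; exact u9⟩
  · obtain ⟨p, q, r, u1, u2, u3, u4, u5, u6, u7, u8, u9⟩ :=
      keyB b a c m hab hac (by rw [← Fv_perm a b c b a c (by omega) (by omega) (by omega)]; exact hm)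
    exact ⟨q, p, r, u3, u4, u1, u2, u5, u6, by omega, by omega,
      by rw [Fv_perm q p r p q r (by omega) (by omega) (by omega)]; exact u9⟩
  · obtain ⟨p, q, r, u1, u2, u3, u4, u5, u6, u7, u8, u9⟩ :=
      keyB b c a m hbc hac (by rw [← Fv_perm a b c b c a (by omega) (by omega) (by omega)]; exact hm)
    exact ⟨r, p, q, u5, u6, u1, u2, u3, u4, by omega, by omega,
      by rw [Fv_perm r p q p q r (by omega) (by omega) (by omega)]; exact u9⟩
  · obtain ⟨p, q, r, u1, u2, u3, u4, u5, u6, u7, u8, u9⟩ :=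
      keyB c b a m hbc hab (by rw [← Fv_perm a b c c b a (by omega) (by omega) (by omega)]; exact hm)
    exact ⟨r, q, p, u5, u6, u3, u4, u1, u2, by omega, by omega,
      by rw [Fv_perm r q p p q r (by omega) (by omega) (by omega)]; exact u9⟩
  · obtain ⟨p, q, r, u1, u2, u3, u4, u5, u6, u7, u8, u9⟩ :=
      keyB c b a m hbc hab (by rw [← Fv_perm a b c c b a (by omega) (by omega) (by omega)]; exact hm)
    exact ⟨r, q, p, u5, u6, u3, u4, u1, u2, by omega, by omega,
      by rw [Fv_perm r q p p q r (by omega) (by omega) (by omega)]; exact u9⟩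

lemma mex_eq {S : Set ℕ} {g : ℕ} (h1 : g ∉ S) (h2 : ∀ m, m < g → m ∈ S) : mex S = g := by
  have hg : g ∈ {n : ℕ | n ∉ S} := h1
  refine le_antisymm (Nat.sInf_le hg) ?_
  by_contra hlt
  push_neg at hlt
  exact Nat.sInf_mem (⟨g, hg⟩ : Set.Nonempty {n : ℕ | n ∉ S}) (h2 _ hlt)

lemma card_eq3 (x y : Fin 3 → ℕ) (h : ∀ i, y i ≤ x i ∧ x i ≤ y i + 1) :
    (Finset.univ.filter fun i => y i < x i).card =
      (x 0 - y 0) + (x 1 - y 1) + (x 2 - y 2) := by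
  rw [Finset.card_filter, Fin.sum_univ_three]
  have h0 := h 0; have h1 := h 1; have h2 := h 2
  split_ifs <;> omega

lemma mooreG_eq_Fv (x : Fin 3 → ℕ) : mooreG 3 2 x = Fv (x 0) (x 1) (x 2) := by
  suffices H : ∀ N (x : Fin 3 → ℕ), ∑ i, x i < N → mooreG 3 2 x = Fv (x 0) (x 1) (x 2) from
    H (∑ i, x i + 1) x (Nat.lt_succ_self _)
  intro N
  induction N with
  | zero => exact fun x hx => absurd hx (Nat.not_lt_zero _)
  | succ N IH =>
    intro x hx
    rw [mooreG]
    apply mex_eq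
    · rintro ⟨⟨y, hy⟩, heq⟩
      have heq' : mooreG 3 2 y = Fv (x 0) (x 1) (x 2) := heq
      have hsum := hy.sum_lt
      have hIH : mooreG 3 2 y = Fv (y 0) (y 1) (y 2) := IH y (by omega)
      obtain ⟨hb, hc1, hc2⟩ := hy
      rw [card_eq3 x y hb] at hc1 hc2
      exact keyA (x 0) (x 1) (x 2) (y 0) (y 1) (y 2) (hb 0).1 (hb 0).2 (hb 1).1 (hb 1).2
        (hb 2).1 (hb 2).2 hc1 hc2 (by rw [← hIH, heq'])
    · intro m hm
      obtain ⟨a', b', c', u1, u2, u3, u4, u5, u6, u7, u8, u9⟩ :=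
        keyB' (x 0) (x 1) (x 2) m hm
      set y : Fin 3 → ℕ := ![a', b', c'] with hy
      have hy0 : y 0 = a' := rfl
      have hy1 : y 1 = b' := rfl
      have hy2 : y 2 = c' := rfl
      have hb : ∀ i, y i ≤ x i ∧ x i ≤ y i + 1 := by
        intro i
        fin_cases i
        · exact ⟨u1, u2⟩
        · exact ⟨u3, u4⟩
        · exact ⟨u5, u6⟩
      have hmove : MooreMove 3 2 x y := by
        refine ⟨hb, ?_, ?_⟩ <;> rw [card_eq3 x y hb, hy0, hy1, hy2]
        · exact u7
        · exact u8
      have hsx : ∑ i, x i = x 0 + x 1 + x 2 := by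
        rw [Fin.sum_univ_three]
      have hsy : ∑ i, y i = a' + b' + c' := by
        rw [Fin.sum_univ_three, hy0, hy1, hy2]
      have hlt : ∑ i, y i < N := by
        have := hmove.sum_lt
        omega
      refine ⟨⟨y, hmove⟩, ?_⟩
      show mooreG 3 2 y = m
      rw [IH y hlt, hy0, hy1, hy2]
      exact u9

/-- In `Nim¹_{3,≤2}` the Sprague–Grundy value of a position `(x₁, x₂, x₃)`
with `x₁ ≤ x₂ ≤ x₃` is determined by its parity vector. -/
theorem stmt1 (x : Fin 3 → ℕ) (h01 : x 0 ≤ x 1) (h12 : x 1 ≤ x 2) :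
    (((Even (x 0) ∧ Even (x 1) ∧ Even (x 2)) ∨ (Odd (x 0) ∧ Odd (x 1) ∧ Odd (x 2))) →
      mooreG 3 2 x = 0) ∧
    (((Even (x 0) ∧ Even (x 1) ∧ Odd (x 2)) ∨ (Odd (x 0) ∧ Odd (x 1) ∧ Even (x 2))) →
      mooreG 3 2 x = 1) ∧
    (((Even (x 0) ∧ Odd (x 1) ∧ Odd (x 2)) ∨ (Odd (x 0) ∧ Even (x 1) ∧ Even (x 2))) →
      mooreG 3 2 x = 2) ∧
    (((Even (x 0) ∧ Odd (x 1) ∧ Even (x 2)) ∨ (Odd (x 0) ∧ Even (x 1) ∧ Odd (x 2))) →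
      mooreG 3 2 x = 3) := by
  have hG : mooreG 3 2 x = 2 * ((x 0 + x 1) % 2) + ((x 1 + x 2) % 2) := by
    rw [mooreG_eq_Fv x, Fv_sorted _ _ _ h01 h12]
  simp only [Nat.even_iff, Nat.odd_iff]
  refine ⟨?_, ?_, ?_, ?_⟩ <;> rintro (⟨e0, e1, e2⟩ | ⟨e0, e1, e2⟩) <;> omega
end

section
/- For every n ≥ 1, in the game Nim^1_{n,≤n} (slow Moore's Nim with k = n), a position x = (x_1, …, x_n) with 0 ≤ x_1 ≤ … ≤ x_n is a P-position of normal play (i.e. G(x) = 0) if and only if every coordinate x_i is even. -/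
lemma mooreG_le (n k : ℕ) (x : Fin n → ℕ) : mooreG n k x ≤ ∑ i, x i := by
  rw [mooreG, mex]
  apply Nat.sInf_le
  simp only [Set.mem_setOf_eq, Set.mem_range, not_exists]
  intro y hy
  have h1 := y.2.sum_lt
  have h2 : mooreG n k y.1 ≤ ∑ i, y.1 i := mooreG_le n k y.1
  omega
termination_by ∑ i, x i
decreasing_by exact y.2.sum_lt

lemma mooreG_zero_iff (n : ℕ) (x : Fin n → ℕ) :
    mooreG n n x = 0 ↔ ∀ i, Even (x i) := by
  rw [mooreG, mex]
  constructor
  · intro h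
    by_contra hodd
    push_neg at hodd
    obtain ⟨i₀, hi₀⟩ := hodd
    set y : Fin n → ℕ := fun i => if Even (x i) then x i else x i - 1 with hy
    have hpos : ∀ i, ¬ Even (x i) → 1 ≤ x i := by
      intro i hi
      rcases Nat.eq_zero_or_pos (x i) with h0 | h1
      · exact absurd (h0 ▸ Even.zero) hi
      · exact h1
    have hylt : ∀ i, y i < x i ↔ ¬ Even (x i) := by
      intro i
      by_cases hev : Even (x i) <;> simp [hy, hev]
      · exact hpos i hev
    have hmove : MooreMove n n x y := by
      refine ⟨fun i => ?_, ?_, ?_⟩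
      · by_cases hev : Even (x i) <;> simp [hy, hev]
        · have := hpos i hev; omega
      · exact Finset.card_pos.mpr
          ⟨i₀, Finset.mem_filter.mpr ⟨Finset.mem_univ _, (hylt i₀).mpr hi₀⟩⟩
      · calc (Finset.univ.filter fun i => y i < x i).card ≤ Finset.univ.card :=
              Finset.card_le_univ _
          _ = n := by simp
    have hyeven : ∀ i, Even (y i) := by
      intro i
      by_cases hev : Even (x i) <;> simp [hy, hev]
      · have h1 := hpos i hev
        rcases Nat.even_or_odd (x i) with he | ho
        · exact absurd he hev
        · obtain ⟨m, hm⟩ := ho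
          exact ⟨m, by omega⟩
    have hsum : ∑ i, y i < ∑ i, x i := hmove.sum_lt
    have hG : mooreG n n y = 0 := (mooreG_zero_iff n y).mpr hyeven
    have h0mem : (0 : ℕ) ∈ Set.range fun z : {z : Fin n → ℕ // MooreMove n n x z} =>
        mooreG n n z.1 := ⟨⟨y, hmove⟩, hG⟩
    have hNmem : (∑ i, x i) ∈ {m : ℕ | m ∉ Set.range fun z : {z : Fin n → ℕ // MooreMove n n x z} =>
        mooreG n n z.1} := by
      simp only [Set.mem_setOf_eq, Set.mem_range, not_exists]
      intro z hz
      have h1 := z.2.sum_lt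
      have h2 : mooreG n n z.1 ≤ ∑ i, z.1 i := mooreG_le n n z.1
      omega
    have := Nat.sInf_mem ⟨_, hNmem⟩
    rw [h] at this
    exact this h0mem
  · intro heven
    apply Nat.sInf_eq_zero.mpr
    left
    simp only [Set.mem_setOf_eq, Set.mem_range, not_exists]
    intro z hz
    obtain ⟨hle, hc, -⟩ := z.2
    obtain ⟨i, hi⟩ := Finset.card_pos.mp hc
    rw [Finset.mem_filter] at hi
    have hxi : x i = z.1 i + 1 := by have := hle i; omega
    have hodd : ¬ Even (z.1 i) := by
      intro he
      have h2 : Even (z.1 i + 1) := hxi ▸ heven i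
      obtain ⟨a, ha⟩ := he
      obtain ⟨b, hb⟩ := h2
      omega
    have : ∀ j, Even (z.1 j) := (mooreG_zero_iff n z.1).mp hz
    exact hodd (this i)
termination_by ∑ i, x i
decreasing_by
  · exact hsum
  · exact z.2.sum_lt

/-- In `Nim¹_{n,≤n}` (`n ≥ 1`), a nondecreasing position is a P-position of
normal play iff all its coordinates are even. -/
theorem stmt2 (n : ℕ) (hn : 1 ≤ n) (x : Fin n → ℕ) (hx : Monotone x) :
    mooreG n n x = 0 ↔ ∀ i, Even (x i) := by
  exact mooreG_zero_iff n x
end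

section
/- For every k ≥ 1 and n = k + 1, in the game Nim^1_{n,≤k} (slow Moore's Nim), a position x = (x_1, …, x_n) with 0 ≤ x_1 ≤ … ≤ x_n is a P-position of normal play (i.e. G(x) = 0) if and only if either all coordinates x_i are even or all coordinates x_i are odd. -/
instance mooreFinite (n k : ℕ) (x : Fin n → ℕ) :
    Finite {y : Fin n → ℕ // MooreMove n k x y} := by
  apply Finite.of_injective
    (fun y => (fun i => (⟨y.1 i, Nat.lt_succ_of_le (y.2.1 i).1⟩ : Fin (x i + 1))))
  intro a b hab
  ext i
  exact congrArg Fin.val (congrFun hab i)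

lemma key (k : ℕ) (hk : 1 ≤ k) : ∀ N (x : Fin (k + 1) → ℕ), ∑ i, x i = N →
    (mooreG (k + 1) k x = 0 ↔ (∀ i, Even (x i)) ∨ (∀ i, Odd (x i))) := by
  intro N
  induction N using Nat.strong_induction_on with
  | _ N ih =>
  intro x hN
  rw [mooreG, mex]
  set S := Set.range fun y : {y : Fin (k+1) → ℕ // MooreMove (k+1) k x y} =>
    mooreG (k+1) k y.1 with hS
  have hcompl : {m : ℕ | m ∉ S}.Nonempty := by
    have : S.Finite := Set.finite_range _
    exact this.infinite_compl.nonempty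
  constructor
  · intro h0
    -- mex = 0 means 0 ∉ S
    have h0S : 0 ∉ S := by
      have hm := Nat.sInf_mem hcompl
      rw [h0] at hm
      exact hm
    by_contra hP
    push_neg at hP
    obtain ⟨⟨i₀, hi₀⟩, ⟨j₀, hj₀⟩⟩ := hP
    rw [Nat.not_even_iff_odd] at hi₀
    rw [Nat.not_odd_iff_even] at hj₀
    -- construct the move decreasing all odd coordinates
    set y : Fin (k+1) → ℕ := fun i => if Odd (x i) then x i - 1 else x i with hy
    have hmove : MooreMove (k+1) k x y := by
      refine ⟨fun i => ?_, ?_, ?_⟩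
      · by_cases hi : Odd (x i) <;> simp [hy, hi] <;> omega
      · rw [Finset.one_le_card]
        refine ⟨i₀, Finset.mem_filter.mpr ⟨Finset.mem_univ _, ?_⟩⟩
        have := hi₀.pos
        simp [hy, hi₀]; omega
      · have hsub : (Finset.univ.filter fun i => y i < x i) ⊆ Finset.univ.erase j₀ := by
          intro i hi
          rw [Finset.mem_filter] at hi
          refine Finset.mem_erase.mpr ⟨?_, Finset.mem_univ _⟩
          rintro rfl
          simp [hy, Nat.not_odd_iff_even.mpr hj₀] at hi
        calc _ ≤ (Finset.univ.erase j₀).card := Finset.card_le_card hsub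
          _ = k := by simp [Finset.card_erase_of_mem]
    have hyeven : ∀ i, Even (y i) := by
      intro i
      by_cases hi : Odd (x i)
      · have := hi.pos
        simp only [hy, if_pos hi]
        rcases hi with ⟨m, hm⟩
        exact ⟨m, by omega⟩
      · simpa [hy, hi] using Nat.not_odd_iff_even.mp hi
    have hy0 : mooreG (k+1) k y = 0 :=
      (ih _ (hN ▸ hmove.sum_lt) y rfl).mpr (Or.inl hyeven)
    exact h0S ⟨⟨y, hmove⟩, hy0⟩
  · intro hP
    -- every move from a same-parity position breaks parity, so 0 ∉ S
    have h0S : 0 ∉ S := by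
      rintro ⟨⟨y, hmove⟩, hy0⟩
      have hPy := (ih _ (hN ▸ hmove.sum_lt) y rfl).mp hy0
      obtain ⟨h1, h2, h3⟩ := hmove
      obtain ⟨i, hi⟩ := Finset.card_pos.mp h2
      rw [Finset.mem_filter] at hi
      have hxi : x i = y i + 1 := by have := h1 i; omega
      -- find an unmoved coordinate
      have hss : (Finset.univ.filter fun i => y i < x i) ⊂ Finset.univ :=
        Finset.ssubset_univ_iff.mpr (by
          intro hEq
          rw [hEq] at h3
          simp at h3)
      obtain ⟨j, -, hj⟩ := Finset.exists_of_ssubset hss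
      rw [Finset.mem_filter, not_and] at hj
      have hxj : y j = x j := by have := h1 j; have := hj (Finset.mem_univ j); omega
      rcases hP with hP | hP <;> rcases hPy with hPy | hPy
      · obtain ⟨a, ha⟩ := hP i; obtain ⟨b, hb⟩ := hPy i; omega
      · obtain ⟨a, ha⟩ := hP j; obtain ⟨b, hb⟩ := hPy j; omega
      · obtain ⟨a, ha⟩ := hP j; obtain ⟨b, hb⟩ := hPy j; omega
      · obtain ⟨a, ha⟩ := hP i; obtain ⟨b, hb⟩ := hPy i; omega
    exact Nat.sInf_eq_zero.mpr (Or.inl h0S)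

/-- In `Nim¹_{k+1,≤k}` (`k ≥ 1`), a nondecreasing position is a P-position of
normal play iff all coordinates are even or all coordinates are odd. -/
theorem stmt3 (k : ℕ) (hk : 1 ≤ k) (x : Fin (k + 1) → ℕ) (hx : Monotone x) :
    mooreG (k + 1) k x = 0 ↔ (∀ i, Even (x i)) ∨ (∀ i, Odd (x i)) := by
  exact key k hk (∑ i, x i) x rfl
end

section
/- In the game Nim^1_{5,≤2} (slow Moore's Nim with n = 5 piles, k = 2), a position x = (x_1, …, x_5) with 0 ≤ x_1 ≤ … ≤ x_5 is a P-position of normal play (i.e. G(x) = 0) if and only if its parity vector p(x) belongs to { (e,e,e,e,e), (e,e,o,o,o), (o,o,e,e,o), (o,o,o,o,e) }. -/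
/-! ### Auxiliary material -/

instance movesFinite (n k : ℕ) (x : Fin n → ℕ) : Finite {y : Fin n → ℕ // MooreMove n k x y} := by
  have : Function.Injective (fun y : {y : Fin n → ℕ // MooreMove n k x y} =>
      (fun i => decide (y.1 i < x i) : Fin n → Bool)) := by
    rintro ⟨y, hy⟩ ⟨z, hz⟩ h
    simp only [Subtype.mk.injEq]
    funext i
    have h1 := (hy.1 i)
    have h2 := (hz.1 i)
    have := congrFun h i
    simp only [decide_eq_decide] at this
    omega
  exact Finite.of_injective _ this

lemma mex_eq_zero_iff {S : Set ℕ} (h : ∃ n, n ∉ S) : mex S = 0 ↔ 0 ∉ S := by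
  constructor
  · intro h0
    have : sInf {n : ℕ | n ∉ S} ∈ {n : ℕ | n ∉ S} := Nat.sInf_mem h
    rwa [show sInf {n : ℕ | n ∉ S} = 0 from h0] at this
  · intro h0
    exact Nat.eq_zero_of_le_zero (Nat.sInf_le h0)

lemma mooreG_eq_zero_iff (n k : ℕ) (x : Fin n → ℕ) :
    mooreG n k x = 0 ↔ ∀ y, MooreMove n k x y → mooreG n k y ≠ 0 := by
  rw [mooreG]
  have hfin : (Set.range fun y : {y : Fin n → ℕ // MooreMove n k x y} => mooreG n k y.1).Finite :=
    Set.finite_range _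
  have hex : ∃ m, m ∉ (Set.range fun y : {y : Fin n → ℕ // MooreMove n k x y} =>
      mooreG n k y.1) := by
    rcases (hfin.infinite_compl).nonempty with ⟨m, hm⟩
    exact ⟨m, hm⟩
  rw [mex_eq_zero_iff hex]
  simp only [Set.mem_range, not_exists]
  constructor
  · intro h y hy h0
    exact h ⟨y, hy⟩ h0
  · rintro h ⟨y, hy⟩
    exact h y hy

lemma mooreMove_perm {n k : ℕ} (σ : Equiv.Perm (Fin n)) {x y : Fin n → ℕ} :
    MooreMove n k (x ∘ σ) (y ∘ σ) ↔ MooreMove n k x y := by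
  have hcard : (Finset.univ.filter fun i => (y ∘ σ) i < (x ∘ σ) i).card
      = (Finset.univ.filter fun i => y i < x i).card := by
    apply Finset.card_bij (fun i _ => σ i)
    · intro a ha
      simp only [Finset.mem_filter, Finset.mem_univ, true_and, Function.comp_apply] at *
      exact ha
    · intro a _ b _ h
      exact σ.injective h
    · intro b hb
      simp only [Finset.mem_filter, Finset.mem_univ, true_and] at hb
      refine ⟨σ.symm b, ?_, by simp⟩
      simp only [Finset.mem_filter, Finset.mem_univ, true_and, Function.comp_apply,
        Equiv.apply_symm_apply]
      exact hb
  unfold MooreMove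
  rw [hcard]
  constructor
  · rintro ⟨h1, h2⟩
    refine ⟨fun i => ?_, h2⟩
    have := h1 (σ.symm i)
    simpa using this
  · rintro ⟨h1, h2⟩
    exact ⟨fun i => h1 (σ i), h2⟩

lemma mooreG_perm_aux (n k : ℕ) : ∀ (N : ℕ) (x : Fin n → ℕ), ∑ i, x i = N →
    ∀ σ : Equiv.Perm (Fin n), mooreG n k (x ∘ σ) = mooreG n k x := by
  intro N
  induction N using Nat.strong_induction_on with
  | _ N ih =>
    intro x hN σ
    rw [mooreG, mooreG]
    congr 1
    ext v
    simp only [Set.mem_range, Subtype.exists]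
    constructor
    · rintro ⟨y, hy, rfl⟩
      have hyy0 : (y ∘ σ.symm) ∘ σ = y := by funext i; simp
      have hz : MooreMove n k x (y ∘ σ.symm) :=
        (mooreMove_perm σ).mp (by rw [hyy0]; exact hy)
      refine ⟨y ∘ σ.symm, hz, ?_⟩
      have hlt : ∑ i, (y ∘ σ.symm) i < N := hN ▸ hz.sum_lt
      have := ih _ hlt (y ∘ σ.symm) rfl σ
      rw [hyy0] at this
      exact this.symm
    · rintro ⟨z, hz, rfl⟩
      refine ⟨z ∘ σ, (mooreMove_perm σ).mpr hz, ?_⟩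
      have hlt : ∑ i, z i < N := hN ▸ hz.sum_lt
      exact ih _ hlt z rfl σ

lemma sorted_move {n : ℕ} {x y : Fin n → ℕ} (hx : Monotone x)
    (hb : ∀ i, y i ≤ x i ∧ x i ≤ y i + 1) (σ : Equiv.Perm (Fin n))
    (hm : Monotone (y ∘ σ)) : ∀ i, (y ∘ σ) i ≤ x i ∧ x i ≤ (y ∘ σ) i + 1 := by
  intro i
  constructor
  · by_contra hlt
    push_neg at hlt
    have hsub : (Finset.Ici i).image σ ⊆ Finset.Ioi i := by
      intro m hm'
      simp only [Finset.mem_image, Finset.mem_Ici] at hm'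
      obtain ⟨j, hj, rfl⟩ := hm'
      simp only [Finset.mem_Ioi]
      by_contra hle
      push_neg at hle
      have h1 : (y ∘ σ) i ≤ (y ∘ σ) j := hm hj
      have h2 : y (σ j) ≤ x (σ j) := (hb _).1
      have h3 : x (σ j) ≤ x i := hx hle
      simp only [Function.comp_apply] at h1 hlt
      omega
    have hc := Finset.card_le_card hsub
    rw [Finset.card_image_of_injective _ σ.injective, Fin.card_Ici, Fin.card_Ioi] at hc
    have : (i : ℕ) < n := i.isLt
    omega
  · by_contra hlt
    push_neg at hlt
    have hsub : (Finset.Iic i).image σ ⊆ Finset.Iio i := by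
      intro m hm'
      simp only [Finset.mem_image, Finset.mem_Iic] at hm'
      obtain ⟨j, hj, rfl⟩ := hm'
      simp only [Finset.mem_Iio]
      by_contra hle
      push_neg at hle
      have h1 : (y ∘ σ) j ≤ (y ∘ σ) i := hm hj
      have h2 : x (σ j) ≤ y (σ j) + 1 := (hb _).2
      have h3 : x i ≤ x (σ j) := hx hle
      simp only [Function.comp_apply] at h1 hlt
      omega
    have hc := Finset.card_le_card hsub
    rw [Finset.card_image_of_injective _ σ.injective, Fin.card_Iic, Fin.card_Iio] at hc
    omega

def Pc (x : Fin 5 → ℕ) : Prop :=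
  (x 0 + x 1) % 2 = 0 ∧ (x 2 + x 3) % 2 = 0 ∧ (x 0 + x 2 + x 4) % 2 = 0

lemma card_filter_five (p : Fin 5 → Prop) [DecidablePred p] :
    (Finset.univ.filter p).card =
      (if p 0 then 1 else 0) + (if p 1 then 1 else 0) + (if p 2 then 1 else 0)
        + (if p 3 then 1 else 0) + (if p 4 then 1 else 0) := by
  rw [← Nat.cast_id (Finset.univ.filter p).card, Finset.natCast_card_filter, Fin.sum_univ_five]

lemma card_eq_sub {x z : Fin 5 → ℕ} (hb : ∀ i, z i ≤ x i ∧ x i ≤ z i + 1) :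
    (Finset.univ.filter fun i => z i < x i).card = ∑ i, x i - ∑ i, z i := by
  rw [card_filter_five, Fin.sum_univ_five, Fin.sum_univ_five]
  have h0 := hb 0; have h1 := hb 1; have h2 := hb 2; have h3 := hb 3; have h4 := hb 4
  split_ifs <;> omega

lemma Acore {x z : Fin 5 → ℕ} (hb : ∀ i, z i ≤ x i ∧ x i ≤ z i + 1)
    (hc1 : 1 ≤ (Finset.univ.filter fun i => z i < x i).card)
    (hc2 : (Finset.univ.filter fun i => z i < x i).card ≤ 2)
    (hP : Pc x) : ¬ Pc z := by
  rw [card_filter_five] at hc1 hc2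
  obtain ⟨hP1, hP2, hP3⟩ := hP
  have h0 := hb 0; have h1 := hb 1; have h2 := hb 2; have h3 := hb 3; have h4 := hb 4
  rintro ⟨q1, q2, q3⟩
  split_ifs at hc1 hc2 <;> omega

lemma monotone5 {z : Fin 5 → ℕ} (h01 : z 0 ≤ z 1) (h12 : z 1 ≤ z 2) (h23 : z 2 ≤ z 3)
    (h34 : z 3 ≤ z 4) : Monotone z := by
  intro a b hab
  fin_cases a <;> fin_cases b <;> simp_all <;> omega

lemma mkMove5 (x : Fin 5 → ℕ) (d0 d1 d2 d3 d4 : ℕ)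
    (hd : d0 ≤ 1 ∧ d1 ≤ 1 ∧ d2 ≤ 1 ∧ d3 ≤ 1 ∧ d4 ≤ 1)
    (hpos : d0 ≤ x 0 ∧ d1 ≤ x 1 ∧ d2 ≤ x 2 ∧ d3 ≤ x 3 ∧ d4 ≤ x 4)
    (hsum : 1 ≤ d0 + d1 + d2 + d3 + d4 ∧ d0 + d1 + d2 + d3 + d4 ≤ 2)
    (hmono : x 0 - d0 ≤ x 1 - d1 ∧ x 1 - d1 ≤ x 2 - d2 ∧ x 2 - d2 ≤ x 3 - d3 ∧
      x 3 - d3 ≤ x 4 - d4)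
    (hPc : ((x 0 - d0) + (x 1 - d1)) % 2 = 0 ∧ ((x 2 - d2) + (x 3 - d3)) % 2 = 0 ∧
      ((x 0 - d0) + (x 2 - d2) + (x 4 - d4)) % 2 = 0) :
    ∃ z, Monotone z ∧ MooreMove 5 2 x z ∧ Pc z := by
  set d : Fin 5 → ℕ := ![d0, d1, d2, d3, d4] with hdd
  refine ⟨fun i => x i - d i, ?_, ⟨?_, ?_, ?_⟩, ?_, ?_, ?_⟩
  · apply monotone5 <;> simp only [hdd, Matrix.cons_val_zero, Matrix.cons_val_one,
      Matrix.head_cons, Matrix.cons_val_two, Matrix.tail_cons, Matrix.cons_val_three,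
      Matrix.cons_val_four] <;> omega
  · intro i
    fin_cases i <;> simp [hdd] <;> omega
  · rw [card_filter_five]
    simp only [hdd, Matrix.cons_val_zero, Matrix.cons_val_one, Matrix.head_cons,
      Matrix.cons_val_two, Matrix.tail_cons, Matrix.cons_val_three, Matrix.cons_val_four]
    split_ifs <;> omega
  · rw [card_filter_five]
    simp only [hdd, Matrix.cons_val_zero, Matrix.cons_val_one, Matrix.head_cons,
      Matrix.cons_val_two, Matrix.tail_cons, Matrix.cons_val_three, Matrix.cons_val_four]
    split_ifs <;> omega
  · simp only [hdd, Matrix.cons_val_zero, Matrix.cons_val_one, Matrix.head_cons]; omega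
  · simp only [hdd, Matrix.cons_val_two, Matrix.tail_cons, Matrix.head_cons,
      Matrix.cons_val_three]; omega
  · simp only [hdd, Matrix.cons_val_zero, Matrix.cons_val_one, Matrix.head_cons,
      Matrix.cons_val_two, Matrix.tail_cons, Matrix.cons_val_four]; omega
lemma Bcore {x : Fin 5 → ℕ} (hx : Monotone x) (h : ¬ Pc x) :
    ∃ z, Monotone z ∧ MooreMove 5 2 x z ∧ Pc z := by
  have m01 : x 0 ≤ x 1 := hx (by decide)
  have m12 : x 1 ≤ x 2 := hx (by decide)
  have m23 : x 2 ≤ x 3 := hx (by decide)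
  have m34 : x 3 ≤ x 4 := hx (by decide)
  unfold Pc at h
  rcases Nat.mod_two_eq_zero_or_one (x 0) with p0 | p0
  · -- x 0 even
    rcases Nat.mod_two_eq_zero_or_one (x 1) with p1 | p1
    · -- x 1 even
      rcases Nat.mod_two_eq_zero_or_one (x 2) with p2 | p2
      · -- x 2 even
        rcases Nat.mod_two_eq_zero_or_one (x 3) with p3 | p3
        · -- x 3 even
          rcases Nat.mod_two_eq_zero_or_one (x 4) with p4 | p4
          · -- x 4 even
            exact absurd ⟨by omega, by omega, by omega⟩ h
          · -- x 4 odd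
            exact mkMove5 x 0 0 0 0 1 (by omega) (by omega) (by omega) (by omega) (by omega)
        · -- x 3 odd
          rcases Nat.mod_two_eq_zero_or_one (x 4) with p4 | p4
          · -- x 4 even
            exact mkMove5 x 0 0 0 1 0 (by omega) (by omega) (by omega) (by omega) (by omega)
          · -- x 4 odd
            exact mkMove5 x 0 0 0 1 1 (by omega) (by omega) (by omega) (by omega) (by omega)
      · -- x 2 odd
        rcases Nat.mod_two_eq_zero_or_one (x 3) with p3 | p3
        · -- x 3 even
          rcases Nat.mod_two_eq_zero_or_one (x 4) with p4 | p4
          · -- x 4 even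
            exact mkMove5 x 0 0 1 0 0 (by omega) (by omega) (by omega) (by omega) (by omega)
          · -- x 4 odd
            exact mkMove5 x 0 0 0 1 0 (by omega) (by omega) (by omega) (by omega) (by omega)
        · -- x 3 odd
          rcases Nat.mod_two_eq_zero_or_one (x 4) with p4 | p4
          · -- x 4 even
            exact mkMove5 x 0 0 0 0 1 (by omega) (by omega) (by omega) (by omega) (by omega)
          · -- x 4 odd
            exact absurd ⟨by omega, by omega, by omega⟩ h
    · -- x 1 odd
      rcases Nat.mod_two_eq_zero_or_one (x 2) with p2 | p2
      · -- x 2 even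
        rcases Nat.mod_two_eq_zero_or_one (x 3) with p3 | p3
        · -- x 3 even
          rcases Nat.mod_two_eq_zero_or_one (x 4) with p4 | p4
          · -- x 4 even
            exact mkMove5 x 0 1 0 0 0 (by omega) (by omega) (by omega) (by omega) (by omega)
          · -- x 4 odd
            exact mkMove5 x 0 1 0 0 1 (by omega) (by omega) (by omega) (by omega) (by omega)
        · -- x 3 odd
          rcases Nat.mod_two_eq_zero_or_one (x 4) with p4 | p4
          · -- x 4 even
            exact mkMove5 x 0 1 0 1 0 (by omega) (by omega) (by omega) (by omega) (by omega)
          · -- x 4 odd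
            exact mkMove5 x 0 1 1 0 0 (by omega) (by omega) (by omega) (by omega) (by omega)
      · -- x 2 odd
        rcases Nat.mod_two_eq_zero_or_one (x 3) with p3 | p3
        · -- x 3 even
          rcases Nat.mod_two_eq_zero_or_one (x 4) with p4 | p4
          · -- x 4 even
            exact mkMove5 x 0 1 1 0 0 (by omega) (by omega) (by omega) (by omega) (by omega)
          · -- x 4 odd
            exact mkMove5 x 0 1 0 1 0 (by omega) (by omega) (by omega) (by omega) (by omega)
        · -- x 3 odd
          rcases Nat.mod_two_eq_zero_or_one (x 4) with p4 | p4
          · -- x 4 even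
            exact mkMove5 x 0 1 0 0 1 (by omega) (by omega) (by omega) (by omega) (by omega)
          · -- x 4 odd
            exact mkMove5 x 0 1 0 0 0 (by omega) (by omega) (by omega) (by omega) (by omega)
  · -- x 0 odd
    rcases Nat.mod_two_eq_zero_or_one (x 1) with p1 | p1
    · -- x 1 even
      rcases Nat.mod_two_eq_zero_or_one (x 2) with p2 | p2
      · -- x 2 even
        rcases Nat.mod_two_eq_zero_or_one (x 3) with p3 | p3
        · -- x 3 even
          rcases Nat.mod_two_eq_zero_or_one (x 4) with p4 | p4
          · -- x 4 even
            exact mkMove5 x 1 0 0 0 0 (by omega) (by omega) (by omega) (by omega) (by omega)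
          · -- x 4 odd
            exact mkMove5 x 0 1 0 0 0 (by omega) (by omega) (by omega) (by omega) (by omega)
        · -- x 3 odd
          rcases Nat.mod_two_eq_zero_or_one (x 4) with p4 | p4
          · -- x 4 even
            exact mkMove5 x 1 0 0 1 0 (by omega) (by omega) (by omega) (by omega) (by omega)
          · -- x 4 odd
            exact mkMove5 x 0 1 0 1 0 (by omega) (by omega) (by omega) (by omega) (by omega)
      · -- x 2 odd
        rcases Nat.mod_two_eq_zero_or_one (x 3) with p3 | p3
        · -- x 3 even
          rcases Nat.mod_two_eq_zero_or_one (x 4) with p4 | p4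
          · -- x 4 even
            exact mkMove5 x 1 0 1 0 0 (by omega) (by omega) (by omega) (by omega) (by omega)
          · -- x 4 odd
            exact mkMove5 x 1 0 0 1 0 (by omega) (by omega) (by omega) (by omega) (by omega)
        · -- x 3 odd
          rcases Nat.mod_two_eq_zero_or_one (x 4) with p4 | p4
          · -- x 4 even
            exact mkMove5 x 0 1 0 0 0 (by omega) (by omega) (by omega) (by omega) (by omega)
          · -- x 4 odd
            exact mkMove5 x 1 0 0 0 0 (by omega) (by omega) (by omega) (by omega) (by omega)
    · -- x 1 odd
      rcases Nat.mod_two_eq_zero_or_one (x 2) with p2 | p2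
      · -- x 2 even
        rcases Nat.mod_two_eq_zero_or_one (x 3) with p3 | p3
        · -- x 3 even
          rcases Nat.mod_two_eq_zero_or_one (x 4) with p4 | p4
          · -- x 4 even
            exact mkMove5 x 1 1 0 0 0 (by omega) (by omega) (by omega) (by omega) (by omega)
          · -- x 4 odd
            exact absurd ⟨by omega, by omega, by omega⟩ h
        · -- x 3 odd
          rcases Nat.mod_two_eq_zero_or_one (x 4) with p4 | p4
          · -- x 4 even
            exact mkMove5 x 0 0 1 0 0 (by omega) (by omega) (by omega) (by omega) (by omega)
          · -- x 4 odd
            exact mkMove5 x 0 0 0 1 0 (by omega) (by omega) (by omega) (by omega) (by omega)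
      · -- x 2 odd
        rcases Nat.mod_two_eq_zero_or_one (x 3) with p3 | p3
        · -- x 3 even
          rcases Nat.mod_two_eq_zero_or_one (x 4) with p4 | p4
          · -- x 4 even
            exact mkMove5 x 0 0 0 1 0 (by omega) (by omega) (by omega) (by omega) (by omega)
          · -- x 4 odd
            exact mkMove5 x 0 0 0 1 1 (by omega) (by omega) (by omega) (by omega) (by omega)
        · -- x 3 odd
          rcases Nat.mod_two_eq_zero_or_one (x 4) with p4 | p4
          · -- x 4 even
            exact absurd ⟨by omega, by omega, by omega⟩ h
          · -- x 4 odd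
            exact mkMove5 x 1 1 0 0 0 (by omega) (by omega) (by omega) (by omega) (by omega)

lemma main_aux : ∀ (N : ℕ) (x : Fin 5 → ℕ), ∑ i, x i = N →
    (mooreG 5 2 x = 0 ↔ Pc (x ∘ Tuple.sort x)) := by
  intro N
  induction N using Nat.strong_induction_on with
  | _ N ih =>
    intro x hN
    rw [mooreG_eq_zero_iff]
    set σ := Tuple.sort x with hσ
    have hxσ : Monotone (x ∘ σ) := Tuple.monotone_sort x
    constructor
    · intro hall
      by_contra hnp
      obtain ⟨z, hzm, hzmove, hzP⟩ := Bcore hxσ hnp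
      have h1 : (z ∘ σ.symm) ∘ σ = z := by funext i; simp
      have hmove : MooreMove 5 2 x (z ∘ σ.symm) :=
        (mooreMove_perm σ).mp (by rw [h1]; exact hzmove)
      have hne := hall _ hmove
      apply hne
      rw [ih _ (hN ▸ hmove.sum_lt) _ rfl]
      have h2 : (z ∘ σ.symm) ∘ ⇑(Tuple.sort (z ∘ σ.symm)) = (z ∘ σ.symm) ∘ ⇑σ :=
        Tuple.unique_monotone (Tuple.monotone_sort _) (by rw [h1]; exact hzm)
      rw [h2, h1]
      exact hzP
    · intro hP y hy
      intro h0
      rw [ih _ (hN ▸ hy.sum_lt) _ rfl] at h0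
      set τ := Tuple.sort (y ∘ σ) with hτ
      have hyσmono : Monotone ((y ∘ σ) ∘ τ) := Tuple.monotone_sort _
      have hyb : ∀ i, (y ∘ σ) i ≤ (x ∘ σ) i ∧ (x ∘ σ) i ≤ (y ∘ σ) i + 1 :=
        fun i => hy.1 (σ i)
      have hzb : ∀ i, ((y ∘ σ) ∘ τ) i ≤ (x ∘ σ) i ∧ (x ∘ σ) i ≤ ((y ∘ σ) ∘ τ) i + 1 :=
        sorted_move hxσ hyb τ hyσmono
      have hsx : ∑ i, (x ∘ σ) i = ∑ i, x i := Equiv.sum_comp σ x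
      have hsy : ∑ i, ((y ∘ σ) ∘ τ) i = ∑ i, y i := by
        have e1 : ∑ i, ((y ∘ σ) ∘ τ) i = ∑ i, (y ∘ σ) i := Equiv.sum_comp τ (y ∘ σ)
        have e2 : ∑ i, (y ∘ σ) i = ∑ i, y i := Equiv.sum_comp σ y
        rw [e1, e2]
      obtain ⟨hyb0, hc1, hc2⟩ := hy
      rw [card_eq_sub hyb0] at hc1 hc2
      have hc1' : 1 ≤ (Finset.univ.filter fun i => ((y ∘ σ) ∘ τ) i < (x ∘ σ) i).card := by
        rw [card_eq_sub hzb, hsx, hsy]; exact hc1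
      have hc2' : (Finset.univ.filter fun i => ((y ∘ σ) ∘ τ) i < (x ∘ σ) i).card ≤ 2 := by
        rw [card_eq_sub hzb, hsx, hsy]; exact hc2
      have hA : ¬ Pc ((y ∘ σ) ∘ τ) := Acore hzb hc1' hc2' hP
      have hcoe : y ∘ ⇑(τ.trans σ) = (y ∘ σ) ∘ τ := by
        rw [Equiv.coe_trans]; rfl
      have huniq : y ∘ ⇑(Tuple.sort y) = y ∘ ⇑(τ.trans σ) :=
        Tuple.unique_monotone (Tuple.monotone_sort y) (by rw [hcoe]; exact hyσmono)
      rw [huniq, hcoe] at h0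
      exact hA h0

/-- In `Nim¹_{5,≤2}`, a nondecreasing position is a P-position of normal play
iff its parity vector is one of `(e,e,e,e,e)`, `(e,e,o,o,o)`, `(o,o,e,e,o)`,
`(o,o,o,o,e)`. -/
theorem stmt5 (x : Fin 5 → ℕ) (hx : Monotone x) :
    mooreG 5 2 x = 0 ↔
      ((Even (x 0) ∧ Even (x 1) ∧ Even (x 2) ∧ Even (x 3) ∧ Even (x 4)) ∨
       (Even (x 0) ∧ Even (x 1) ∧ Odd (x 2) ∧ Odd (x 3) ∧ Odd (x 4)) ∨
       (Odd (x 0) ∧ Odd (x 1) ∧ Even (x 2) ∧ Even (x 3) ∧ Odd (x 4)) ∨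
       (Odd (x 0) ∧ Odd (x 1) ∧ Odd (x 2) ∧ Odd (x 3) ∧ Even (x 4))) := by
  have hmain := main_aux (∑ i, x i) x rfl
  have hsort : x ∘ ⇑(Tuple.sort x) = x := by
    rw [Tuple.sort_eq_refl_iff_monotone.mpr hx]
    simp
  rw [hsort] at hmain
  rw [hmain]
  unfold Pc
  simp only [Nat.even_iff, Nat.odd_iff]
  rcases Nat.mod_two_eq_zero_or_one (x 0) with p0|p0 <;>
  rcases Nat.mod_two_eq_zero_or_one (x 1) with p1|p1 <;>
  rcases Nat.mod_two_eq_zero_or_one (x 2) with p2|p2 <;>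
  rcases Nat.mod_two_eq_zero_or_one (x 3) with p3|p3 <;>
  rcases Nat.mod_two_eq_zero_or_one (x 4) with p4|p4 <;>
  simp [Nat.add_mod, p0, p1, p2, p3, p4]
end

section
/- For every n ≥ 1, in the game Nim^1_{n,≤n} (slow Moore's Nim with k = n), a position x satisfies G(x) = 0 and G⁻(x) = 1 if and only if x = (0, …, 0, 2j) for some j ≥ 0, and x satisfies G(x) = 1 and G⁻(x) = 0 if and only if x = (0, …, 0, 2j+1) for some j ≥ 0. -/
open Classical in
/-- The misère Sprague–Grundy function of slow Moore's Nim: the same `mex`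
recursion at nonterminal positions, and value `1` at terminal positions. -/
noncomputable def mooreGm (n k : ℕ) (x : Fin n → ℕ) : ℕ :=
  if ∃ y, MooreMove n k x y then
    mex (Set.range fun y : {y : Fin n → ℕ // MooreMove n k x y} => mooreGm n k y.1)
  else 1
termination_by ∑ i, x i
decreasing_by exact y.2.sum_lt
/-!
From a single pile of `t` tokens the only move removes one token, so there `G = t mod 2` and
`G⁻ = (t + 1) mod 2`. At a position with two nonempty piles, `G` and `G⁻` take the same sets of
values on the options: options with two nonempty piles by induction, while a single-pile option
can be traded for a single-pile option of the other parity, because with `k = n` one move may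
empty all the other piles (which then hold at most one token each) and take zero or one token
from the remaining one. Hence `G = G⁻` there, and a monotone position with at most one nonempty
pile is `(0, …, 0, t)`.
-/

open Function

theorem mex_empty : mex ∅ = 0 :=
  Nat.sInf_eq_zero.mpr (Or.inl (Set.notMem_empty 0))

theorem mex_singleton_zero : mex {0} = 1 := by
  refine le_antisymm (Nat.sInf_le (by simp)) (Nat.one_le_iff_ne_zero.mpr fun h => ?_)
  rcases Nat.sInf_eq_zero.mp h with h0 | hempty
  · exact h0 rfl
  · exact (Set.eq_empty_iff_forall_notMem.mp hempty) 1 (by simp)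

theorem mex_singleton_of_ne_zero {a : ℕ} (ha : a ≠ 0) : mex {a} = 0 :=
  Nat.sInf_eq_zero.mpr (Or.inl (Ne.symm ha))

theorem mex_singleton_mod_two (t : ℕ) : mex {t % 2} = (t + 1) % 2 := by
  rcases Nat.mod_two_eq_zero_or_one t with h | h
  · rw [h, mex_singleton_zero]; omega
  · rw [h, mex_singleton_of_ne_zero one_ne_zero]; omega

theorem exists_eq_pi_single_of_support_subsingleton {ι M : Type*} [DecidableEq ι] [Nonempty ι]
    [Zero M] {y : ι → M} (hy : (support y).Subsingleton) : ∃ j t, y = Pi.single j t := by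
  rcases hy.eq_empty_or_singleton with hempty | ⟨j, hj⟩
  · exact ⟨Classical.arbitrary ι, 0, by rw [Pi.single_zero, ← support_eq_empty_iff, hempty]⟩
  · refine ⟨j, y j, funext fun i => ?_⟩
    by_cases hij : i = j
    · rw [hij, Pi.single_eq_same]
    · rw [Pi.single_eq_of_ne hij]
      exact notMem_support.mp (by rw [hj]; exact hij)

section MooreNim

variable {n k : ℕ}

theorem mooreG_eq_mex_image (x : Fin n → ℕ) :
    mooreG n k x = mex (mooreG n k '' {y | MooreMove n k x y}) := by
  rw [mooreG, Set.image_eq_range]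
  rfl

theorem mooreGm_eq_mex_image {x : Fin n → ℕ} (hx : ∃ y, MooreMove n k x y) :
    mooreGm n k x = mex (mooreGm n k '' {y | MooreMove n k x y}) := by
  rw [mooreGm, if_pos hx, Set.image_eq_range]
  rfl

theorem not_mooreMove_zero (y : Fin n → ℕ) : ¬ MooreMove n k 0 y := by
  rintro ⟨-, hcard, -⟩
  obtain ⟨i, hi⟩ := Finset.card_pos.mp hcard
  exact Nat.not_lt_zero _ (Finset.mem_filter.mp hi).2

theorem mooreG_zero : mooreG n k 0 = 0 := by
  have hopts : {y | MooreMove n k 0 y} = ∅ := Set.eq_empty_of_forall_notMem not_mooreMove_zero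
  rw [mooreG_eq_mex_image, hopts, Set.image_empty, mex_empty]

theorem mooreGm_zero : mooreGm n k 0 = 1 := by
  rw [mooreGm, if_neg fun ⟨y, hy⟩ => not_mooreMove_zero y hy]

theorem mooreMove_update_pred (hk : 1 ≤ k) {x : Fin n → ℕ} {i : Fin n} (hi : x i ≠ 0) :
    MooreMove n k x (update x i (x i - 1)) := by
  have hdec : (Finset.univ.filter fun l => update x i (x i - 1) l < x l) = {i} := by
    ext l
    by_cases hl : l = i
    · subst hl
      simp only [Finset.mem_filter, Finset.mem_univ, true_and, Finset.mem_singleton, update_self,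
        iff_true]
      omega
    · simp [hl]
  refine ⟨fun l => ?_, by rw [hdec, Finset.card_singleton], by rwa [hdec, Finset.card_singleton]⟩
  by_cases hl : l = i
  · rw [hl, update_self]
    omega
  · simp [hl]

theorem mooreMove_pi_single_succ_iff (hk : 1 ≤ k) (j : Fin n) (t : ℕ) (y : Fin n → ℕ) :
    MooreMove n k (Pi.single j (t + 1)) y ↔ y = Pi.single j t := by
  constructor
  · rintro ⟨hstep, hcard, -⟩
    obtain ⟨l, hl⟩ := Finset.card_pos.mp hcard
    have hlj : l = j := by
      by_contra hlj
      have := (Finset.mem_filter.mp hl).2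
      rw [Pi.single_eq_of_ne hlj] at this
      exact Nat.not_lt_zero _ this
    subst hlj
    funext i
    have := hstep i
    by_cases hil : i = l
    · subst hil
      have := (Finset.mem_filter.mp hl).2
      simp only [Pi.single_eq_same] at *
      omega
    · simp only [Pi.single_eq_of_ne hil] at *
      omega
  · rintro rfl
    have hmove := mooreMove_update_pred hk (x := Pi.single j (t + 1)) (i := j) (by simp)
    convert hmove using 1
    ext l
    by_cases hl : l = j <;> simp [hl]

theorem mooreG_pi_single (hk : 1 ≤ k) (j : Fin n) (t : ℕ) :
    mooreG n k (Pi.single j t) = t % 2 := by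
  induction t with
  | zero => rw [Pi.single_zero, mooreG_zero]
  | succ t ih =>
    have hopts : {y | MooreMove n k (Pi.single j (t + 1)) y} = {Pi.single j t} :=
      Set.ext (mooreMove_pi_single_succ_iff hk j t)
    rw [mooreG_eq_mex_image, hopts, Set.image_singleton, ih, mex_singleton_mod_two]

theorem mooreGm_pi_single (hk : 1 ≤ k) (j : Fin n) (t : ℕ) :
    mooreGm n k (Pi.single j t) = (t + 1) % 2 := by
  induction t with
  | zero => rw [Pi.single_zero, mooreGm_zero]
  | succ t ih =>
    have hopts : {y | MooreMove n k (Pi.single j (t + 1)) y} = {Pi.single j t} :=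
      Set.ext (mooreMove_pi_single_succ_iff hk j t)
    rw [mooreGm_eq_mex_image ⟨_, ((mooreMove_pi_single_succ_iff hk j t) _).mpr rfl⟩, hopts,
      Set.image_singleton, ih, mex_singleton_mod_two]

end MooreNim

section SlowMooreNimAllPiles

variable {n : ℕ}

theorem mooreMove_self_iff {x y : Fin n → ℕ} :
    MooreMove n n x y ↔ (∀ i, y i ≤ x i ∧ x i ≤ y i + 1) ∧ ∃ i, y i < x i := by
  refine ⟨fun h => ⟨h.1, ?_⟩, fun ⟨hstep, i, hi⟩ => ⟨hstep, ?_, ?_⟩⟩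
  · obtain ⟨i, hi⟩ := Finset.card_pos.mp h.2.1
    exact ⟨i, (Finset.mem_filter.mp hi).2⟩
  · exact Finset.card_pos.mpr ⟨i, Finset.mem_filter.mpr ⟨Finset.mem_univ i, hi⟩⟩
  · exact (Finset.card_filter_le _ _).trans (by simp)

theorem mooreMove_pi_single_of_nontrivial {x : Fin n → ℕ} (hx : (support x).Nontrivial)
    {j : Fin n} {t : ℕ} (hother : ∀ i ≠ j, x i ≤ 1) (ht : t ≤ x j) (ht' : x j ≤ t + 1) :
    MooreMove n n x (Pi.single j t) := by
  obtain ⟨i, hi, hij⟩ := hx.exists_ne j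
  refine mooreMove_self_iff.mpr ⟨fun l => ?_, i, ?_⟩
  · by_cases hl : l = j
    · rw [hl, Pi.single_eq_same]
      exact ⟨ht, ht'⟩
    · rw [Pi.single_eq_of_ne hl]
      exact ⟨Nat.zero_le _, hother l hl⟩
  · rw [Pi.single_eq_of_ne hij]
    exact Nat.pos_of_ne_zero hi

theorem exists_mooreMove_pi_single_mod_two {x : Fin n → ℕ} (hx : (support x).Nontrivial)
    {j : Fin n} {t : ℕ} (hy : MooreMove n n x (Pi.single j t)) :
    ∃ j' t', MooreMove n n x (Pi.single j' t') ∧ t' % 2 = (t + 1) % 2 := by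
  have hother : ∀ i ≠ j, x i ≤ 1 := fun i hi => by
    simpa only [Pi.single_eq_of_ne hi] using (hy.1 i).2
  have hj := hy.1 j
  rw [Pi.single_eq_same] at hj
  rcases Nat.lt_or_ge t (x j) with hlt | hge
  · exact ⟨j, t + 1, mooreMove_pi_single_of_nontrivial hx hother (by omega) (by omega), rfl⟩
  rcases t with _ | s
  · obtain ⟨i, hi, hij⟩ := hx.exists_ne j
    have hle : ∀ l, x l ≤ 1 := fun l => by
      by_cases hl : l = j
      · rw [hl]; omega
      · exact hother l hl
    have hxi : x i = 1 := by have := hle i; have : x i ≠ 0 := hi; omega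
    exact ⟨i, 1, mooreMove_pi_single_of_nontrivial hx (fun l _ => hle l) (by omega) (by omega), rfl⟩
  · exact ⟨j, s, mooreMove_pi_single_of_nontrivial hx hother (by omega) (by omega), by omega⟩

theorem mooreG_eq_mooreGm_of_nontrivial {x : Fin n → ℕ} (hx : (support x).Nontrivial) :
    mooreG n n x = mooreGm n n x := by
  induction hs : ∑ i, x i using Nat.strong_induction_on generalizing x with
  | _ s ih =>
  obtain ⟨i, hi⟩ := hx.nonempty
  have : Nonempty (Fin n) := ⟨i⟩
  have hn : 1 ≤ n := Fin.pos i
  have hswap : ∀ y, MooreMove n n x y →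
      (∃ z, MooreMove n n x z ∧ mooreGm n n z = mooreG n n y) ∧
      (∃ z, MooreMove n n x z ∧ mooreG n n z = mooreGm n n y) := by
    intro y hy
    by_cases hy2 : (support y).Nontrivial
    · have hyy := ih _ (hs ▸ hy.sum_lt) hy2 rfl
      exact ⟨⟨y, hy, hyy.symm⟩, ⟨y, hy, hyy⟩⟩
    · obtain ⟨j, t, rfl⟩ :=
        exists_eq_pi_single_of_support_subsingleton (Set.not_nontrivial_iff.mp hy2)
      obtain ⟨j', t', hz, ht'⟩ := exists_mooreMove_pi_single_mod_two hx hy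
      refine ⟨⟨_, hz, ?_⟩, ⟨_, hz, ?_⟩⟩
      · rw [mooreGm_pi_single hn, mooreG_pi_single hn]; omega
      · rw [mooreG_pi_single hn, mooreGm_pi_single hn, ht']
  have himage : mooreG n n '' {y | MooreMove n n x y} = mooreGm n n '' {y | MooreMove n n x y} := by
    ext v
    constructor
    · rintro ⟨y, hy, rfl⟩
      exact (hswap y hy).1
    · rintro ⟨y, hy, rfl⟩
      exact (hswap y hy).2
  rw [mooreG_eq_mex_image, mooreGm_eq_mex_image ⟨_, mooreMove_update_pred hn hi⟩, himage]

end SlowMooreNimAllPiles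

/-- In `Nim¹_{n,≤n}` with `n = m + 1 ≥ 1` piles, the swap positions:
`(G, G⁻) = (0, 1)` exactly at positions `(0, …, 0, 2j)` and
`(G, G⁻) = (1, 0)` exactly at positions `(0, …, 0, 2j+1)`. -/
theorem stmt7 (m : ℕ) (x : Fin (m + 1) → ℕ) (hx : Monotone x) :
    ((mooreG (m + 1) (m + 1) x = 0 ∧ mooreGm (m + 1) (m + 1) x = 1) ↔
      ((∀ i, i ≠ Fin.last m → x i = 0) ∧ ∃ j : ℕ, x (Fin.last m) = 2 * j)) ∧
    ((mooreG (m + 1) (m + 1) x = 1 ∧ mooreGm (m + 1) (m + 1) x = 0) ↔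
      ((∀ i, i ≠ Fin.last m → x i = 0) ∧ ∃ j : ℕ, x (Fin.last m) = 2 * j + 1)) := by
  by_cases hlast : ∀ i, i ≠ Fin.last m → x i = 0
  · have hsingle : x = Pi.single (Fin.last m) (x (Fin.last m)) := funext fun i => by
      by_cases hi : i = Fin.last m
      · rw [hi, Pi.single_eq_same]
      · rw [Pi.single_eq_of_ne hi, hlast i hi]
    have hG := mooreG_pi_single m.succ_pos (Fin.last m) (x (Fin.last m))
    have hGm := mooreGm_pi_single m.succ_pos (Fin.last m) (x (Fin.last m))
    rw [← hsingle] at hG hGm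
    rw [hG, hGm]
    exact ⟨⟨fun h => ⟨hlast, x (Fin.last m) / 2, by omega⟩, fun ⟨_, j, hj⟩ => by omega⟩,
      ⟨fun h => ⟨hlast, x (Fin.last m) / 2, by omega⟩, fun ⟨_, j, hj⟩ => by omega⟩⟩
  · have hnontriv : (support x).Nontrivial := by
      push Not at hlast
      obtain ⟨i, hi, hxi⟩ := hlast
      exact ⟨i, hxi, Fin.last m,
        ((Nat.pos_of_ne_zero hxi).trans_le (hx (Fin.le_last i))).ne', hi⟩
    rw [mooreG_eq_mooreGm_of_nontrivial hnontriv]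
    simp only [hlast, false_and, iff_false]
    omega
end

section
/- For every n ≥ 2, in the game Nim^1_{n,≤n−1} (slow Moore's Nim with k = n − 1), a position x satisfies G(x) = 0 and G⁻(x) = 1 if and only if x = (i, i, …, i, i+2j) for some i, j ≥ 0, and x satisfies G(x) = 1 and G⁻(x) = 0 if and only if x = (i, i, …, i, i+2j+1) for some i, j ≥ 0. -/
def IsFlatAt {n : ℕ} (x : Fin n → ℕ) (c : ℕ) (p : Fin n) : Prop :=
  (∀ l, l ≠ p → x l = c) ∧ c ≤ x p

def IsFlat {n : ℕ} (x : Fin n → ℕ) : Prop := ∃ c p, IsFlatAt x c p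

def IsNearAt {n : ℕ} (x : Fin n → ℕ) (c : ℕ) (p : Fin n) : Prop :=
  c + 1 ≤ x p ∧ (∀ l, l ≠ p → x l = c ∨ x l = c + 1) ∧
  (∃ l, l ≠ p ∧ x l = c) ∧ (∃ l, l ≠ p ∧ x l = c + 1)

def IsNear {n : ℕ} (x : Fin n → ℕ) : Prop := ∃ c p, IsNearAt x c p

-- constructing moves
lemma mk_move {m : ℕ} (x : Fin (m+2) → ℕ) (T : Finset (Fin (m+2)))
    (hpos : ∀ i ∈ T, 0 < x i) (hne : T.Nonempty) (hcard : T.card ≤ m + 1) :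
    MooreMove (m+2) (m+1) x (fun i => if i ∈ T then x i - 1 else x i) := by
  have hfilt : (Finset.univ.filter fun i => (if i ∈ T then x i - 1 else x i) < x i) = T := by
    ext i
    simp only [Finset.mem_filter, Finset.mem_univ, true_and]
    by_cases h : i ∈ T
    · have := hpos i h
      simp only [h, if_true, iff_true]
      omega
    · simp [h]
  refine ⟨fun i => ?_, ?_, ?_⟩
  · by_cases h : i ∈ T
    · have := hpos i h; simp only [h, if_true]; omega
    · simp [h]
  · rw [hfilt]; exact Finset.card_pos.mpr hne
  · rw [hfilt]; exact hcard

-- the two flat moves from a near position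
lemma near_flat_moves {m : ℕ} {x : Fin (m+2) → ℕ} {c : ℕ} {p : Fin (m+2)}
    (hn : IsNearAt x c p) :
    ∃ y1 y2 : Fin (m+2) → ℕ, MooreMove (m+2) (m+1) x y1 ∧ MooreMove (m+2) (m+1) x y2 ∧
      IsFlatAt y1 c p ∧ IsFlatAt y2 c p ∧ y1 p = x p ∧ y2 p = x p - 1 := by
  obtain ⟨hp, hall, ⟨l0, hl0p, hl0⟩, ⟨l1, hl1p, hl1⟩⟩ := hn
  set T1 : Finset (Fin (m+2)) := (Finset.univ.erase p).filter (fun l => x l = c + 1) with hT1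
  have hmemT1 : ∀ l, l ∈ T1 ↔ l ≠ p ∧ x l = c + 1 := by
    intro l; simp [hT1, Finset.mem_erase, Finset.mem_filter, and_comm]
  have hl1T : l1 ∈ T1 := (hmemT1 l1).mpr ⟨hl1p, hl1⟩
  have hpT : p ∉ T1 := fun h => ((hmemT1 p).mp h).1 rfl
  have hl0T : l0 ∉ T1 := fun h => by have := ((hmemT1 l0).mp h).2; omega
  have hcard : T1.card ≤ m := by
    have hsub : T1 ⊆ (Finset.univ.erase p).erase l0 := by
      intro l hl
      rw [hmemT1] at hl
      refine Finset.mem_erase.mpr ⟨?_, Finset.mem_erase.mpr ⟨hl.1, Finset.mem_univ l⟩⟩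
      intro h; subst h; omega
    calc T1.card ≤ ((Finset.univ.erase p).erase l0).card := Finset.card_le_card hsub
    _ = m := by
        rw [Finset.card_erase_of_mem (Finset.mem_erase.mpr ⟨hl0p, Finset.mem_univ l0⟩),
          Finset.card_erase_of_mem (Finset.mem_univ p)]
        simp
  have hpos1 : ∀ i ∈ T1, 0 < x i := fun i hi => by rw [hmemT1] at hi; omega
  refine ⟨_, _, mk_move x T1 hpos1 ⟨l1, hl1T⟩ (by omega),
    mk_move x (insert p T1) (fun i hi => by
      rcases Finset.mem_insert.mp hi with h | h
      · subst h; omega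
      · exact hpos1 i h) ⟨p, Finset.mem_insert_self p T1⟩
      (by rw [Finset.card_insert_of_notMem hpT]; omega), ?_, ?_, ?_, ?_⟩
  · constructor
    · intro l hl
      by_cases h : l ∈ T1
      · rw [hmemT1] at h; simp only [if_pos ((hmemT1 _).mpr h)] at *; omega
      · simp only [if_neg h]
        rcases hall l hl with h' | h'
        · exact h'
        · exact absurd ((hmemT1 l).mpr ⟨hl, h'⟩) h
    · simp only [if_neg hpT]; omega
  · constructor
    · intro l hl
      have hlp : l ∉ (insert p T1) ↔ l ∉ T1 := by simp [Finset.mem_insert, hl]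
      by_cases h : l ∈ T1
      · have : l ∈ insert p T1 := Finset.mem_insert_of_mem h
        simp only [if_pos this]; rw [hmemT1] at h; omega
      · have : l ∉ insert p T1 := hlp.mpr h
        simp only [if_neg this]
        rcases hall l hl with h' | h'
        · exact h'
        · exact absurd ((hmemT1 l).mpr ⟨hl, h'⟩) h
    · simp only [if_pos (Finset.mem_insert_self p T1)]; omega
  · simp [hpT]
  · simp

lemma exists_ne_fin {m : ℕ} (p : Fin (m+2)) : ∃ l : Fin (m+2), l ≠ p := by
  rcases eq_or_ne p 0 with h | h
  · exact ⟨1, by simp [h, Fin.ext_iff]⟩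
  · exact ⟨0, Ne.symm h⟩

-- if all coords off p are in {c, c+1} and c ≤ x p, then flat or near
lemma flat_or_near {m : ℕ} {x : Fin (m+2) → ℕ} {c : ℕ} {p : Fin (m+2)}
    (hall : ∀ l, l ≠ p → x l = c ∨ x l = c + 1) (hp : c ≤ x p) :
    IsFlat x ∨ IsNear x := by
  set B : Finset (Fin (m+2)) := (Finset.univ.erase p).filter (fun l => x l = c + 1) with hB
  have hmemB : ∀ l, l ∈ B ↔ l ≠ p ∧ x l = c + 1 := by
    intro l; simp [hB, Finset.mem_erase, Finset.mem_filter, and_comm]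
  by_cases hxp : x p = c
  · -- x p = c
    rcases Finset.eq_empty_or_nonempty B with hBe | ⟨q, hq⟩
    · left
      refine ⟨c, p, fun l hl => ?_, hp⟩
      rcases hall l hl with h | h
      · exact h
      · exact absurd ((hmemB l).mpr ⟨hl, h⟩) (by simp [hBe])
    · rcases Finset.eq_singleton_or_nontrivial hq with hBs | hBnt
      · left
        refine ⟨c, q, fun l hl => ?_, ?_⟩
        · rcases eq_or_ne l p with h | h
          · rw [h]; exact hxp
          · rcases hall l h with h' | h'
            · exact h'
            · have hlB : l ∈ B := (hmemB l).mpr ⟨h, h'⟩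
              rw [hBs, Finset.mem_singleton] at hlB
              exact absurd hlB hl
        · have := ((hmemB q).mp hq).2; omega
      · right
        obtain ⟨q2, hq2, hne⟩ := Finset.Nontrivial.exists_ne hBnt q
        rw [hmemB] at hq hq2
        refine ⟨c, q, by omega, fun l hl => ?_, ⟨p, Ne.symm hq.1, hxp⟩, ⟨q2, hne, hq2.2⟩⟩
        rcases eq_or_ne l p with h | h
        · rw [h]; left; exact hxp
        · exact hall l h
  · -- x p ≥ c + 1
    set A : Finset (Fin (m+2)) := (Finset.univ.erase p).filter (fun l => x l = c) with hA
    have hmemA : ∀ l, l ∈ A ↔ l ≠ p ∧ x l = c := by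
      intro l; simp [hA, Finset.mem_erase, Finset.mem_filter, and_comm]
    rcases Finset.eq_empty_or_nonempty A with hAe | ⟨a, ha⟩
    · left
      refine ⟨c + 1, p, fun l hl => ?_, by omega⟩
      rcases hall l hl with h | h
      · exact absurd ((hmemA l).mpr ⟨hl, h⟩) (by simp [hAe])
      · exact h
    · rcases Finset.eq_empty_or_nonempty B with hBe | ⟨b, hb⟩
      · left
        refine ⟨c, p, fun l hl => ?_, hp⟩
        rcases hall l hl with h | h
        · exact h
        · exact absurd ((hmemB l).mpr ⟨hl, h⟩) (by simp [hBe])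
      · right
        rw [hmemA] at ha; rw [hmemB] at hb
        exact ⟨c, p, by omega, hall, ⟨a, ha.1, ha.2⟩, ⟨b, hb.1, hb.2⟩⟩

-- classification of moves from a flat position
lemma flat_move_classify {m : ℕ} {x y : Fin (m+2) → ℕ} {c : ℕ} {p : Fin (m+2)}
    (hf : IsFlatAt x c p) (hm : MooreMove (m+2) (m+1) x y) :
    (∃ c' p', IsFlatAt y c' p' ∧ (y p' - c') % 2 = (x p - c + 1) % 2) ∨ IsNear y := by
  obtain ⟨hfl, hfp⟩ := hf
  obtain ⟨h1, hc1, hc2⟩ := hm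
  set F : Finset (Fin (m+2)) := Finset.univ.filter (fun i => y i < x i) with hF
  have hmemF : ∀ l, l ∈ F ↔ y l < x l := by intro l; simp [hF]
  have hyval : ∀ l, (l ∈ F → y l + 1 = x l) ∧ (l ∉ F → y l = x l) := by
    intro l
    have := h1 l
    constructor <;> intro h <;> rw [hmemF] at h <;> omega
  have hFne : F.Nonempty := Finset.card_pos.mp hc1
  have hFnu : F ≠ Finset.univ := by
    intro h
    rw [h, Finset.card_univ] at hc2
    rw [Fintype.card_fin] at hc2; omega
  by_cases ht : x p = c
  · -- t = 0 : constant position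
    have hxc : ∀ l, x l = c := by
      intro l; rcases eq_or_ne l p with h | h
      · rw [h]; exact ht
      · exact hfl l h
    obtain ⟨l1, hl1⟩ := hFne
    have hcpos : 1 ≤ c := by
      have := (hyval l1).1 hl1
      have := hxc l1
      omega
    -- complement of F
    by_cases h2 : ∃ q1 q2 : Fin (m+2), q1 ∉ F ∧ q2 ∉ F ∧ q1 ≠ q2
    · right
      obtain ⟨q1, q2, hq1, hq2, hq12⟩ := h2
      refine ⟨c - 1, q1, ?_, fun l hl => ?_, ?_, ⟨q2, hq12.symm, ?_⟩⟩
      · have := (hyval q1).2 hq1; have := hxc q1; omega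
      · by_cases h : l ∈ F
        · have := (hyval l).1 h; have := hxc l; left; omega
        · have := (hyval l).2 h; have := hxc l; right; omega
      · refine ⟨l1, fun h => ?_, ?_⟩
        · subst h; exact hq1 hl1
        · have := (hyval l1).1 hl1; have := hxc l1; omega
      · have := (hyval q2).2 hq2; have := hxc q2; omega
    · -- exactly one element outside F
      push_neg at h2
      obtain ⟨q, hq⟩ : ∃ q, q ∉ F := by
        by_contra h
        push_neg at h
        exact hFnu (Finset.eq_univ_iff_forall.mpr h)
      left
      refine ⟨c - 1, q, ⟨fun l hl => ?_, ?_⟩, ?_⟩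
      · have hlF : l ∈ F := by
          by_contra h
          exact hl (h2 l q h hq)
        have := (hyval l).1 hlF; have := hxc l; omega
      · have := (hyval q).2 hq; have := hxc q; omega
      · have := (hyval q).2 hq; have := hxc q; omega
  · -- t ≥ 1
    have htp : c + 1 ≤ x p := by omega
    by_cases hp : p ∈ F
    · by_cases hFp : ∀ l ∈ F, l = p
      · -- F = {p}
        left
        refine ⟨c, p, ⟨fun l hl => ?_, ?_⟩, ?_⟩
        · have hlF : l ∉ F := fun h => hl (hFp l h)
          have := (hyval l).2 hlF; have := hfl l hl; omega
        · have := (hyval p).1 hp; omega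
        · have := (hyval p).1 hp; omega
      · push_neg at hFp
        obtain ⟨l1, hl1F, hl1p⟩ := hFp
        right
        have hcpos : 1 ≤ c := by
          have := (hyval l1).1 hl1F; have := hfl l1 hl1p; omega
        -- some l ≠ p outside F
        obtain ⟨l0, hl0p, hl0F⟩ : ∃ l0, l0 ≠ p ∧ l0 ∉ F := by
          by_contra h
          push_neg at h
          apply hFnu
          apply Finset.eq_univ_iff_forall.mpr
          intro l
          rcases eq_or_ne l p with hh | hh
          · rw [hh]; exact hp
          · exact h l hh
        refine ⟨c - 1, p, ?_, fun l hl => ?_, ⟨l1, hl1p, ?_⟩, ⟨l0, hl0p, ?_⟩⟩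
        · have := (hyval p).1 hp; omega
        · by_cases h : l ∈ F
          · have := (hyval l).1 h; have := hfl l hl; left; omega
          · have := (hyval l).2 h; have := hfl l hl; right; omega
        · have := (hyval l1).1 hl1F; have := hfl l1 hl1p; omega
        · have := (hyval l0).2 hl0F; have := hfl l0 hl0p; omega
    · -- p ∉ F
      obtain ⟨l1, hl1F⟩ := hFne
      have hl1p : l1 ≠ p := fun h => hp (h ▸ hl1F)
      have hcpos : 1 ≤ c := by
        have := (hyval l1).1 hl1F; have := hfl l1 hl1p; omega
      by_cases hFall : ∀ l, l ≠ p → l ∈ F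
      · left
        refine ⟨c - 1, p, ⟨fun l hl => ?_, ?_⟩, ?_⟩
        · have := (hyval l).1 (hFall l hl); have := hfl l hl; omega
        · have := (hyval p).2 hp; omega
        · have := (hyval p).2 hp; omega
      · push_neg at hFall
        obtain ⟨l0, hl0p, hl0F⟩ := hFall
        right
        refine ⟨c - 1, p, ?_, fun l hl => ?_, ⟨l1, hl1p, ?_⟩, ⟨l0, hl0p, ?_⟩⟩
        · have := (hyval p).2 hp; omega
        · by_cases h : l ∈ F
          · have := (hyval l).1 h; have := hfl l hl; left; omega
          · have := (hyval l).2 h; have := hfl l hl; right; omega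
        · have := (hyval l1).1 hl1F; have := hfl l1 hl1p; omega
        · have := (hyval l0).2 hl0F; have := hfl l0 hl0p; omega

lemma mex_eq_zero {S : Set ℕ} (h : 0 ∉ S) : mex S = 0 :=
  Nat.sInf_eq_zero.mpr (Or.inl h)

lemma mex_eq_one {S : Set ℕ} (h0 : 0 ∈ S) (h1 : 1 ∉ S) : mex S = 1 := by
  have hle : mex S ≤ 1 := Nat.sInf_le h1
  have : mex S ≠ 0 := by
    intro h
    rcases Nat.sInf_eq_zero.mp h with h' | h'
    · exact h' h0
    · exact absurd h' (Set.nonempty_iff_ne_empty.mp ⟨1, h1⟩)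
  omega

lemma two_le_mex {S : Set ℕ} (hne : {n : ℕ | n ∉ S}.Nonempty) (h0 : 0 ∈ S) (h1 : 1 ∈ S) :
    2 ≤ mex S := by
  apply le_csInf hne
  intro b hb
  simp only [Set.mem_setOf_eq] at hb
  by_contra h
  interval_cases b <;> tauto

instance moveFinite (n k : ℕ) (x : Fin n → ℕ) : Finite {y : Fin n → ℕ // MooreMove n k x y} := by
  apply Finite.of_injective (fun y => (fun i => (⟨y.1 i, Nat.lt_succ_of_le (y.2.1 i).1⟩ : Fin (x i + 1))))
  intro a b hab
  ext i
  exact congrArg Fin.val (congrFun hab i)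

lemma compl_nonempty {n k : ℕ} {x : Fin n → ℕ} (f : {y : Fin n → ℕ // MooreMove n k x y} → ℕ) :
    {v : ℕ | v ∉ Set.range f}.Nonempty :=
  ((Set.finite_range f).infinite_compl).nonempty

theorem key_s8 (m : ℕ) : ∀ (N : ℕ) (x : Fin (m+2) → ℕ), ∑ i, x i = N →
    (∀ c p, IsFlatAt x c p →
      mooreG (m+2) (m+1) x = (x p - c) % 2 ∧ mooreGm (m+2) (m+1) x = (x p - c + 1) % 2) ∧
    (¬ IsFlat x → mooreG (m+2) (m+1) x = mooreGm (m+2) (m+1) x) ∧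
    (IsNear x → 2 ≤ mooreG (m+2) (m+1) x ∧ 2 ≤ mooreGm (m+2) (m+1) x) := by
  intro N
  induction N using Nat.strong_induction_on with
  | _ N IH =>
  intro x hxN
  have IHx : ∀ y : Fin (m+2) → ℕ, MooreMove (m+2) (m+1) x y →
      (∀ c p, IsFlatAt y c p →
        mooreG (m+2) (m+1) y = (y p - c) % 2 ∧ mooreGm (m+2) (m+1) y = (y p - c + 1) % 2) ∧
      (¬ IsFlat y → mooreG (m+2) (m+1) y = mooreGm (m+2) (m+1) y) ∧
      (IsNear y → 2 ≤ mooreG (m+2) (m+1) y ∧ 2 ≤ mooreGm (m+2) (m+1) y) := by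
    intro y hm
    exact IH (∑ i, y i) (hxN ▸ hm.sum_lt) y rfl
  have part3 : IsNear x → 2 ≤ mooreG (m+2) (m+1) x ∧ 2 ≤ mooreGm (m+2) (m+1) x := by
    rintro ⟨c, p, hn⟩
    obtain ⟨y1, y2, hm1, hm2, hf1, hf2, hy1p, hy2p⟩ := near_flat_moves hn
    have hcp : c + 1 ≤ x p := hn.1
    have hG1 : mooreG (m+2) (m+1) y1 = (x p - c) % 2 := by
      have := ((IHx y1 hm1).1 c p hf1).1; rw [hy1p] at this; exact this
    have hG2 : mooreG (m+2) (m+1) y2 = (x p - 1 - c) % 2 := by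
      have := ((IHx y2 hm2).1 c p hf2).1; rw [hy2p] at this; exact this
    have hGm1 : mooreGm (m+2) (m+1) y1 = (x p - c + 1) % 2 := by
      have := ((IHx y1 hm1).1 c p hf1).2; rw [hy1p] at this; exact this
    have hGm2 : mooreGm (m+2) (m+1) y2 = (x p - 1 - c + 1) % 2 := by
      have := ((IHx y2 hm2).1 c p hf2).2; rw [hy2p] at this; exact this
    constructor
    · rw [mooreG]
      apply two_le_mex (compl_nonempty _)
      · rcases (by omega : (x p - c) % 2 = 0 ∨ (x p - 1 - c) % 2 = 0) with h | h
        · exact ⟨⟨y1, hm1⟩, hG1.trans h⟩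
        · exact ⟨⟨y2, hm2⟩, hG2.trans h⟩
      · rcases (by omega : (x p - c) % 2 = 1 ∨ (x p - 1 - c) % 2 = 1) with h | h
        · exact ⟨⟨y1, hm1⟩, hG1.trans h⟩
        · exact ⟨⟨y2, hm2⟩, hG2.trans h⟩
    · rw [mooreGm, if_pos ⟨y1, hm1⟩]
      apply two_le_mex (compl_nonempty _)
      · rcases (by omega : (x p - c + 1) % 2 = 0 ∨ (x p - 1 - c + 1) % 2 = 0) with h | h
        · exact ⟨⟨y1, hm1⟩, hGm1.trans h⟩
        · exact ⟨⟨y2, hm2⟩, hGm2.trans h⟩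
      · rcases (by omega : (x p - c + 1) % 2 = 1 ∨ (x p - 1 - c + 1) % 2 = 1) with h | h
        · exact ⟨⟨y1, hm1⟩, hGm1.trans h⟩
        · exact ⟨⟨y2, hm2⟩, hGm2.trans h⟩
  have part1 : ∀ c p, IsFlatAt x c p →
      mooreG (m+2) (m+1) x = (x p - c) % 2 ∧ mooreGm (m+2) (m+1) x = (x p - c + 1) % 2 := by
    intro c p hf
    have hfl := hf.1
    have hfp := hf.2
    have hGnot : ((x p - c) % 2) ∉
        Set.range (fun y : {y : Fin (m+2) → ℕ // MooreMove (m+2) (m+1) x y} =>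
          mooreG (m+2) (m+1) y.1) := by
      rintro ⟨⟨y, hm⟩, hv⟩
      simp only at hv
      rcases flat_move_classify hf hm with ⟨c', p', hf', hpar⟩ | hnear
      · have hy := ((IHx y hm).1 c' p' hf').1
        omega
      · have hy := ((IHx y hm).2.2 hnear).1
        omega
    have hGmnot : ∀ (hterm : ∃ y, MooreMove (m+2) (m+1) x y), ((x p - c + 1) % 2) ∉
        Set.range (fun y : {y : Fin (m+2) → ℕ // MooreMove (m+2) (m+1) x y} =>
          mooreGm (m+2) (m+1) y.1) := by
      rintro hterm ⟨⟨y, hm⟩, hv⟩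
      simp only at hv
      rcases flat_move_classify hf hm with ⟨c', p', hf', hpar⟩ | hnear
      · have hy := ((IHx y hm).1 c' p' hf').2
        omega
      · have hy := ((IHx y hm).2.2 hnear).2
        omega
    constructor
    · rw [mooreG]
      by_cases hpar : (x p - c) % 2 = 0
      · rw [hpar]
        exact mex_eq_zero (by simpa only [hpar] using hGnot)
      · have hpar1 : (x p - c) % 2 = 1 := by omega
        have hxp1 : c + 1 ≤ x p := by omega
        rw [hpar1]
        apply mex_eq_one ?_ (by simpa only [hpar1] using hGnot)
        -- move reducing just p
        have hm0 := mk_move x {p} (fun i hi => by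
            rw [Finset.mem_singleton] at hi; subst hi; omega)
          ⟨p, Finset.mem_singleton_self p⟩ (by simp)
        have hf0 : IsFlatAt (fun i => if i ∈ ({p} : Finset (Fin (m+2))) then x i - 1 else x i) c p := by
          constructor
          · intro l hl
            show (if l ∈ ({p} : Finset (Fin (m+2))) then x l - 1 else x l) = c
            rw [if_neg (by simpa using hl)]
            exact hfl l hl
          · show c ≤ if p ∈ ({p} : Finset (Fin (m+2))) then x p - 1 else x p
            rw [if_pos (Finset.mem_singleton_self p)]; omega
        have := ((IHx _ hm0).1 c p hf0).1
        rw [if_pos (Finset.mem_singleton_self p)] at this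
        exact ⟨⟨_, hm0⟩, this.trans (by omega)⟩
    · by_cases hterm : ∃ y, MooreMove (m+2) (m+1) x y
      · rw [mooreGm, if_pos hterm]
        by_cases hpar : (x p - c + 1) % 2 = 0
        · rw [hpar]
          exact mex_eq_zero (by simpa only [hpar] using hGmnot hterm)
        · have hpar1 : (x p - c + 1) % 2 = 1 := by omega
          rw [hpar1]
          apply mex_eq_one ?_ (by simpa only [hpar1] using hGmnot hterm)
          by_cases hxp1 : c + 1 ≤ x p
          · -- reduce just p; excess t - 1 is odd
            have hm0 := mk_move x {p} (fun i hi => by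
                rw [Finset.mem_singleton] at hi; subst hi; omega)
              ⟨p, Finset.mem_singleton_self p⟩ (by simp)
            have hf0 : IsFlatAt (fun i => if i ∈ ({p} : Finset (Fin (m+2))) then x i - 1 else x i) c p := by
              constructor
              · intro l hl
                show (if l ∈ ({p} : Finset (Fin (m+2))) then x l - 1 else x l) = c
                rw [if_neg (by simpa using hl)]
                exact hfl l hl
              · show c ≤ if p ∈ ({p} : Finset (Fin (m+2))) then x p - 1 else x p
                rw [if_pos (Finset.mem_singleton_self p)]; omega
            have := ((IHx _ hm0).1 c p hf0).2
            rw [if_pos (Finset.mem_singleton_self p)] at this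
            exact ⟨⟨_, hm0⟩, this.trans (by omega)⟩
          · -- x p = c : constant position, c ≥ 1; reduce everything except p
            have hxpc : x p = c := by omega
            have hxall : ∀ l, x l = c := by
              intro l
              rcases eq_or_ne l p with h | h
              · rw [h]; exact hxpc
              · exact hfl l h
            have hc1 : 1 ≤ c := by
              obtain ⟨y, hy⟩ := hterm
              obtain ⟨l, hl⟩ := Finset.card_pos.mp hy.2.1
              rw [Finset.mem_filter] at hl
              have := hxall l
              omega
            obtain ⟨l0, hl0⟩ := exists_ne_fin p
            have hm0 := mk_move x (Finset.univ.erase p)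
              (fun i hi => by rw [hxall i]; omega)
              ⟨l0, Finset.mem_erase.mpr ⟨hl0, Finset.mem_univ l0⟩⟩
              (by rw [Finset.card_erase_of_mem (Finset.mem_univ p), Finset.card_univ,
                    Fintype.card_fin]; omega)
            have hf0 : IsFlatAt (fun i => if i ∈ Finset.univ.erase p then x i - 1 else x i)
                (c - 1) p := by
              constructor
              · intro l hl
                show (if l ∈ Finset.univ.erase p then x l - 1 else x l) = c - 1
                rw [if_pos (Finset.mem_erase.mpr ⟨hl, Finset.mem_univ l⟩), hxall l]
              · show c - 1 ≤ if p ∈ Finset.univ.erase p then x p - 1 else x p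
                rw [if_neg (fun h => (Finset.mem_erase.mp h).1 rfl)]; omega
            have := ((IHx _ hm0).1 (c - 1) p hf0).2
            rw [if_neg (fun h => (Finset.mem_erase.mp h).1 rfl)] at this
            exact ⟨⟨_, hm0⟩, this.trans (by omega)⟩
      · rw [mooreGm, if_neg hterm]
        have hxpc : x p = c := by
          by_contra h
          apply hterm
          refine ⟨_, mk_move x {p} (fun i hi => by
              rw [Finset.mem_singleton] at hi; subst hi; omega)
            ⟨p, Finset.mem_singleton_self p⟩ (by simp)⟩
        omega
  refine ⟨part1, ?_, part3⟩
  -- part 2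
  intro hnf
  have hpos : ∃ l, 0 < x l := by
    by_contra h
    push_neg at h
    exact hnf ⟨0, 0, fun l _ => by have := h l; omega, Nat.zero_le _⟩
  obtain ⟨l, hl⟩ := hpos
  have hterm : ∃ y, MooreMove (m+2) (m+1) x y :=
    ⟨_, mk_move x {l} (fun i hi => by rw [Finset.mem_singleton] at hi; subst hi; omega)
      ⟨l, Finset.mem_singleton_self l⟩ (by simp)⟩
  rw [mooreG, mooreGm, if_pos hterm]
  congr 1
  ext v
  simp only [Set.mem_range, Subtype.exists]
  constructor
  · rintro ⟨y, hm, rfl⟩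
    by_cases hfy : IsFlat y
    · obtain ⟨c, p, hfyc⟩ := hfy
      have hGy := ((IHx y hm).1 c p hfyc).1
      have hnx : IsNear x := by
        rcases flat_or_near (x := x) (c := c) (p := p) (fun l' hl' => by
            have h1 := (hm.1 l').1
            have h2 := (hm.1 l').2
            have := hfyc.1 l' hl'
            omega) (le_trans hfyc.2 (hm.1 p).1) with h | h
        · exact absurd h hnf
        · exact h
      obtain ⟨c', p', hn⟩ := hnx
      obtain ⟨y1, y2, hm1, hm2, hf1, hf2, hy1p, hy2p⟩ := near_flat_moves hn
      have hcp : c' + 1 ≤ x p' := hn.1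
      have hGm1 : mooreGm (m+2) (m+1) y1 = (x p' - c' + 1) % 2 := by
        have := ((IHx y1 hm1).1 c' p' hf1).2; rw [hy1p] at this; exact this
      have hGm2 : mooreGm (m+2) (m+1) y2 = (x p' - 1 - c' + 1) % 2 := by
        have := ((IHx y2 hm2).1 c' p' hf2).2; rw [hy2p] at this; exact this
      rcases (by omega : mooreGm (m+2) (m+1) y1 = (y p - c) % 2 ∨
          mooreGm (m+2) (m+1) y2 = (y p - c) % 2) with h | h
      · exact ⟨y1, hm1, h.trans hGy.symm⟩
      · exact ⟨y2, hm2, h.trans hGy.symm⟩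
    · exact ⟨y, hm, ((IHx y hm).2.1 hfy).symm⟩
  · rintro ⟨y, hm, rfl⟩
    by_cases hfy : IsFlat y
    · obtain ⟨c, p, hfyc⟩ := hfy
      have hGy := ((IHx y hm).1 c p hfyc).2
      have hnx : IsNear x := by
        rcases flat_or_near (x := x) (c := c) (p := p) (fun l' hl' => by
            have h1 := (hm.1 l').1
            have h2 := (hm.1 l').2
            have := hfyc.1 l' hl'
            omega) (le_trans hfyc.2 (hm.1 p).1) with h | h
        · exact absurd h hnf
        · exact h
      obtain ⟨c', p', hn⟩ := hnx
      obtain ⟨y1, y2, hm1, hm2, hf1, hf2, hy1p, hy2p⟩ := near_flat_moves hn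
      have hcp : c' + 1 ≤ x p' := hn.1
      have hG1 : mooreG (m+2) (m+1) y1 = (x p' - c') % 2 := by
        have := ((IHx y1 hm1).1 c' p' hf1).1; rw [hy1p] at this; exact this
      have hG2 : mooreG (m+2) (m+1) y2 = (x p' - 1 - c') % 2 := by
        have := ((IHx y2 hm2).1 c' p' hf2).1; rw [hy2p] at this; exact this
      rcases (by omega : mooreG (m+2) (m+1) y1 = (y p - c + 1) % 2 ∨
          mooreG (m+2) (m+1) y2 = (y p - c + 1) % 2) with h | h
      · exact ⟨y1, hm1, h.trans hGy.symm⟩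
      · exact ⟨y2, hm2, h.trans hGy.symm⟩
    · exact ⟨y, hm, (IHx y hm).2.1 hfy⟩

lemma flat_at_last {m : ℕ} {x : Fin (m+2) → ℕ} (hx : Monotone x) {c : ℕ} {p : Fin (m+2)}
    (hf : IsFlatAt x c p) : IsFlatAt x c (Fin.last (m+1)) := by
  rcases eq_or_ne p (Fin.last (m+1)) with h | h
  · exact h ▸ hf
  · have hxl : x (Fin.last (m+1)) = c := hf.1 _ (Ne.symm h)
    have hxp : x p ≤ x (Fin.last (m+1)) := hx (Fin.le_last p)
    have hxpc : x p = c := le_antisymm (hxl ▸ hxp) hf.2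
    refine ⟨fun l hl => ?_, hxl ▸ le_refl c⟩
    rcases eq_or_ne l p with h' | h'
    · rw [h']; exact hxpc
    · exact hf.1 l h'

lemma zero_ne_last {m : ℕ} : (0 : Fin (m+2)) ≠ Fin.last (m+1) := by
  intro h
  have := congrArg Fin.val h
  simp [Fin.last] at this

/-- In `Nim¹_{n,≤n-1}` with `n = m + 2 ≥ 2` piles, the swap positions:
`(G, G⁻) = (0, 1)` exactly at positions `(i, i, …, i, i+2j)` and
`(G, G⁻) = (1, 0)` exactly at positions `(i, i, …, i, i+2j+1)`. -/
theorem stmt8 (m : ℕ) (x : Fin (m + 2) → ℕ) (hx : Monotone x) :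
    ((mooreG (m + 2) (m + 1) x = 0 ∧ mooreGm (m + 2) (m + 1) x = 1) ↔
      (∃ i j : ℕ, (∀ l, l ≠ Fin.last (m + 1) → x l = i) ∧
        x (Fin.last (m + 1)) = i + 2 * j)) ∧
    ((mooreG (m + 2) (m + 1) x = 1 ∧ mooreGm (m + 2) (m + 1) x = 0) ↔
      (∃ i j : ℕ, (∀ l, l ≠ Fin.last (m + 1) → x l = i) ∧
        x (Fin.last (m + 1)) = i + 2 * j + 1)) := by
  by_cases hflat : IsFlat x
  · obtain ⟨c, p, hf⟩ := hflat
    have hf' := flat_at_last hx hf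
    obtain ⟨h1, h2⟩ := (key_s8 m (∑ i, x i) x rfl).1 c (Fin.last (m+1)) hf'
    have hle := hf'.2
    constructor
    · constructor
      · rintro ⟨hg, -⟩
        rw [h1] at hg
        exact ⟨c, (x (Fin.last (m+1)) - c) / 2, fun l hl => hf'.1 l hl, by omega⟩
      · rintro ⟨i, j, hi, hj⟩
        have hic : c = i := by rw [← hf'.1 0 zero_ne_last, hi 0 zero_ne_last]
        subst hic
        rw [h1, h2, hj]
        omega
    · constructor
      · rintro ⟨hg, -⟩
        rw [h1] at hg
        exact ⟨c, (x (Fin.last (m+1)) - c - 1) / 2, fun l hl => hf'.1 l hl, by omega⟩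
      · rintro ⟨i, j, hi, hj⟩
        have hic : c = i := by rw [← hf'.1 0 zero_ne_last, hi 0 zero_ne_last]
        subst hic
        rw [h1, h2, hj]
        omega
  · have h12 := (key_s8 m (∑ i, x i) x rfl).2.1 hflat
    constructor <;> constructor
    · rintro ⟨hg, hgm⟩
      rw [h12, hgm] at hg
      exact absurd hg one_ne_zero
    · rintro ⟨i, j, hi, hj⟩
      exact absurd ⟨i, Fin.last (m+1), hi, by omega⟩ hflat
    · rintro ⟨hg, hgm⟩
      rw [h12, hgm] at hg
      exact absurd hg.symm one_ne_zero
    · rintro ⟨i, j, hi, hj⟩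
      exact absurd ⟨i, Fin.last (m+1), hi, by omega⟩ hflat
end
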